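/- arXiv:2205.04338 — 8 statements merged into one kernel-verified Lean document; each statement's English description precedes it below -/
import Mathlib

section
/- Let C be a decreasing monomial code of length 2^n whose generating set G is the downward closure (with respect to ⪯) of a minimal set I_min of negative monomials in n variables, and let C' be the lifted code in n+1 variables whose generating set G' is the downward closure of {g·V̄_n : g ∈ I_min}. Then {m / V̄_n : m ∈ G' and V̄_n divides m} = G; equivalently, the partial derivative ∂C'/∂V̄_n equals C. -/
open Finset

/-- Negative monomials in variables `V̄_0, V̄_1, …` are identified with their (finite) sets of
variable indices.  `eqCardLe m m'` is the equal-degree case of the partial order `⪯`: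
the sorted index lists satisfy `i_l ≤ j_l` componentwise. -/
def eqCardLe (m m' : Finset ℕ) : Prop :=
  List.Forall₂ (· ≤ ·) (m.sort (· ≤ ·)) (m'.sort (· ≤ ·))

/-- The partial order `⪯` on negative monomials: either the degrees are equal and the sorted
index lists compare componentwise, or `deg m < deg m'` and there is a divisor `d` of `m'`
of the same degree as `m` with `m ⪯ d`. -/
def mle (m m' : Finset ℕ) : Prop :=
  (m.card = m'.card ∧ eqCardLe m m') ∨
  (m.card < m'.card ∧ ∃ d ⊆ m', d.card = m.card ∧ eqCardLe m d)

/-- A set of negative monomials is decreasing if it is downward closed under `⪯`. -/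
def Decreasing (G : Set (Finset ℕ)) : Prop :=
  ∀ m m' : Finset ℕ, mle m m' → m' ∈ G → m ∈ G

/-- Downward closure with respect to `⪯`. -/
def dcl (I : Set (Finset ℕ)) : Set (Finset ℕ) := {m | ∃ g ∈ I, mle m g}

/-- Evaluation of the negative monomial `∏_{i ∈ m} V̄_i = ∏_{i ∈ m} (1 + V_i)` as a Boolean
function on `F_2^n` (coordinates of index `≥ n` are ignored). -/
def evalMon (n : ℕ) (m : Finset ℕ) : (Fin n → ZMod 2) → ZMod 2 :=
  fun v => ∏ i ∈ m, (1 + if h : i < n then v ⟨i, h⟩ else 0)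

/-- The monomial code generated by a set `G` of negative monomials in `n` variables:
the `F_2`-span of the evaluations.  The ambient space `F_2^{2^n}` is realised as the
functions `F_2^n → F_2` (coordinates indexed by binary expansions). -/
def monCode (n : ℕ) (G : Set (Finset ℕ)) :
    Submodule (ZMod 2) ((Fin n → ZMod 2) → ZMod 2) :=
  Submodule.span (ZMod 2) (evalMon n '' G)

/-- Generating monomials of the Reed–Muller code `R(r,n)`: all negative monomials of degree
at most `r` in the variables `V̄_0, …, V̄_{n-1}`. -/
def RMset (r n : ℕ) : Set (Finset ℕ) := {m | m ⊆ Finset.range n ∧ m.card ≤ r}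

/-- The Reed–Muller code `R(r,n)`. -/
def RMCode (r n : ℕ) : Submodule (ZMod 2) ((Fin n → ZMod 2) → ZMod 2) :=
  monCode n (RMset r n)

/-- `Kdim G i` is the dimension `K_i = #{m ∈ G : V̄_i ∣ m}` of the partial derivative
`∂C/∂V̄_i` of the monomial code generated by `G`. -/
noncomputable def Kdim (G : Set (Finset ℕ)) (i : ℕ) : ℕ := {m ∈ G | i ∈ m}.ncard

/-- The map `z ↦ A z + b` on `F_2^n`. -/
def affPerm (n : ℕ) (A : Matrix (Fin n) (Fin n) (ZMod 2)) (b : Fin n → ZMod 2) :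
    (Fin n → ZMod 2) → (Fin n → ZMod 2) :=
  fun z => A.mulVec z + b

/-- The affine automorphism group `A(C)` of a code `C ⊆ F_2^{2^n}` (coordinates identified
with `F_2^n` via binary expansion): all affine bijections `z ↦ Az + b` whose induced
coordinate permutation maps every codeword to a codeword. -/
def affAutGroup (n : ℕ) (C : Submodule (ZMod 2) ((Fin n → ZMod 2) → ZMod 2)) :
    Set ((Fin n → ZMod 2) → (Fin n → ZMod 2)) :=
  {σ | ∃ A b, IsUnit (Matrix.det A) ∧ σ = affPerm n A b ∧ ∀ f ∈ C, f ∘ σ ∈ C}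

/-- Given a block profile `s = (s_0, …, s_{l-1})`, `blockOf s i` is the index of the block
containing coordinate `i` (blocks partition `{0,…,n-1}` consecutively). -/
def blockOf {l : ℕ} (s : Fin l → ℕ) (i : ℕ) : ℕ :=
  (Finset.univ.filter (fun k : Fin l => ∑ j ∈ Finset.Iic k, s j ≤ i)).card

/-- `A` is block lower triangular with profile `s`: every entry whose column lies in a
strictly later block than its row vanishes. -/
def IsBLT {l n : ℕ} (s : Fin l → ℕ) (A : Matrix (Fin n) (Fin n) (ZMod 2)) : Prop :=
  ∀ i j : Fin n, blockOf s i.val < blockOf s j.val → A i j = 0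

/-- The block lower triangular affine group `BLTA(s)`, as a set of maps `F_2^n → F_2^n`. -/
def BLTA {l : ℕ} (n : ℕ) (s : Fin l → ℕ) :
    Set ((Fin n → ZMod 2) → (Fin n → ZMod 2)) :=
  {σ | ∃ A b, IsUnit (Matrix.det A) ∧ IsBLT s A ∧ σ = affPerm n A b}

/-- Hamming weight of a vector in `F_2^{2^n}` (realised as a function `F_2^n → F_2`). -/
def wt (n : ℕ) (f : (Fin n → ZMod 2) → ZMod 2) : ℕ :=
  (Finset.univ.filter fun v => f v ≠ 0).card

lemma forall₂_exists_le {l₁ l₂ : List ℕ} (h : List.Forall₂ (· ≤ ·) l₁ l₂) {a : ℕ}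
    (ha : a ∈ l₁) : ∃ b ∈ l₂, a ≤ b := by
  induction h with
  | nil => simp at ha
  | cons h₁ h₂ ih =>
    rcases List.mem_cons.1 ha with rfl | ha
    · exact ⟨_, List.mem_cons_self .., h₁⟩
    · obtain ⟨b, hb, hab⟩ := ih ha
      exact ⟨b, List.mem_cons_of_mem _ hb, hab⟩

lemma sort_append_max {m : Finset ℕ} {n : ℕ} (h : ∀ x ∈ m, x < n) :
    (insert n m).sort (· ≤ ·) = m.sort (· ≤ ·) ++ [n] := by
  have hn : n ∉ m := fun hn => lt_irrefl n (h n hn)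
  refine (fun h1 h2 h3 => List.Perm.eq_of_pairwise' (r := (· ≤ ·)) h2 h3 h1) ?_ ?_ ?_
  · rw [← Multiset.coe_eq_coe]
    push_cast [Finset.sort_eq]
    rw [Finset.insert_val, Multiset.ndinsert_of_notMem hn]
    rw [← Multiset.coe_add, Finset.sort_eq, ← Multiset.cons_coe, Multiset.coe_nil,
      Multiset.add_cons, add_zero]
  · exact Finset.pairwise_sort _ _
  · rw [List.pairwise_append]
    refine ⟨Finset.pairwise_sort _ _, List.pairwise_singleton _ _, ?_⟩
    intro a ha b hb
    rw [List.mem_singleton] at hb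
    subst hb
    exact (h a (Finset.mem_sort _ |>.1 ha)).le

lemma eqCardLe_exists {m m' : Finset ℕ} (h : eqCardLe m m') {a : ℕ} (ha : a ∈ m) :
    ∃ b ∈ m', a ≤ b := by
  obtain ⟨b, hb, hab⟩ := forall₂_exists_le h ((Finset.mem_sort _).2 ha)
  exact ⟨b, (Finset.mem_sort _).1 hb, hab⟩

lemma eqCardLe_insert {m m' : Finset ℕ} {n : ℕ} (hm : ∀ x ∈ m, x < n)
    (hm' : ∀ x ∈ m', x < n) (h : eqCardLe m m') : eqCardLe (insert n m) (insert n m') := by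
  unfold eqCardLe
  rw [sort_append_max hm, sort_append_max hm']
  exact List.rel_append h (List.Forall₂.cons le_rfl List.Forall₂.nil)

lemma eqCardLe_erase {m m' : Finset ℕ} {n : ℕ} (hn : n ∈ m) (hn' : n ∈ m')
    (hm : ∀ x ∈ m, x ≤ n) (hm' : ∀ x ∈ m', x ≤ n) (h : eqCardLe m m') :
    eqCardLe (m.erase n) (m'.erase n) := by
  have e1 : (insert n (m.erase n)).sort (· ≤ ·) = (m.erase n).sort (· ≤ ·) ++ [n] :=
    sort_append_max (fun x hx => lt_of_le_of_ne (hm x (Finset.mem_of_mem_erase hx))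
      (Finset.ne_of_mem_erase hx))
  have e1' : (insert n (m'.erase n)).sort (· ≤ ·) = (m'.erase n).sort (· ≤ ·) ++ [n] :=
    sort_append_max (fun x hx => lt_of_le_of_ne (hm' x (Finset.mem_of_mem_erase hx))
      (Finset.ne_of_mem_erase hx))
  rw [Finset.insert_erase hn] at e1
  rw [Finset.insert_erase hn'] at e1'
  unfold eqCardLe at h ⊢
  rw [e1, e1'] at h
  have hlen : ((m.erase n).sort (· ≤ ·)).length = ((m'.erase n).sort (· ≤ ·)).length := by
    have := h.length_eq
    simpa using this
  have := List.forall₂_take_append _ _ _ h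
  rwa [← hlen, List.take_left] at this


/-- If `G` is the downward closure of `I_min` (monomials in `n` variables)
and `G'` is the downward closure of `{g·V̄_n : g ∈ I_min}`, then
`{m / V̄_n : m ∈ G', V̄_n ∣ m} = G`, i.e. `∂C'/∂V̄_n = C`. -/
theorem stmt1 (n : ℕ) (hn : 1 ≤ n) (Imin : Set (Finset ℕ))
    (hI : ∀ m ∈ Imin, m ⊆ Finset.range n) :
    (fun m => m.erase n) '' {m ∈ dcl ((fun g => insert n g) '' Imin) | n ∈ m} =
      dcl Imin := by
  ext m
  simp only [Set.mem_image, Set.mem_setOf_eq]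
  constructor
  · rintro ⟨M, ⟨⟨G, ⟨g, hg, rfl⟩, hMG⟩, hnM⟩, rfl⟩
    have hglt : ∀ x ∈ g, x < n := fun x hx => Finset.mem_range.1 (hI g hg hx)
    have hng : n ∉ g := fun h => lt_irrefl n (hglt n h)
    have hgin : ∀ x ∈ insert n g, x ≤ n := by
      intro x hx
      rcases Finset.mem_insert.1 hx with rfl | hx
      · exact le_rfl
      · exact (hglt x hx).le
    refine ⟨g, hg, ?_⟩
    rcases hMG with ⟨hcard, hle⟩ | ⟨hcard, d, hd, hdc, hle⟩
    · -- equal card case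
      have hMle : ∀ x ∈ M, x ≤ n := fun x hx => by
        obtain ⟨b, hb, hab⟩ := eqCardLe_exists hle hx
        exact le_trans hab (hgin b hb)
      have he := eqCardLe_erase hnM (Finset.mem_insert_self n g) hMle hgin hle
      rw [Finset.erase_insert hng] at he
      left
      refine ⟨?_, he⟩
      rw [Finset.card_erase_of_mem hnM, hcard]
      simp only
      rw [Finset.card_insert_of_notMem hng]
      omega
    · -- strict case
      have hdle : ∀ x ∈ d, x ≤ n := fun x hx => hgin x (hd hx)
      have hMle : ∀ x ∈ M, x ≤ n := fun x hx => by
        obtain ⟨b, hb, hab⟩ := eqCardLe_exists hle hx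
        exact le_trans hab (hdle b hb)
      have hnd : n ∈ d := by
        obtain ⟨b, hb, hab⟩ := eqCardLe_exists hle hnM
        have : b = n := le_antisymm (hdle b hb) hab
        rwa [this] at hb
      have he := eqCardLe_erase hnM hnd hMle hdle hle
      have hdg : d.erase n ⊆ g := by
        intro x hx
        rcases Finset.mem_insert.1 (hd (Finset.mem_of_mem_erase hx)) with h' | h'
        · exact absurd h' (Finset.ne_of_mem_erase hx)
        · exact h'
      have hcards : (M.erase n).card = (d.erase n).card := by
        rw [Finset.card_erase_of_mem hnM, Finset.card_erase_of_mem hnd, hdc]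
      have hcardle : (M.erase n).card ≤ g.card :=
        hcards ▸ Finset.card_le_card hdg
      rcases lt_or_eq_of_le hcardle with hlt | heq
      · right
        exact ⟨hlt, d.erase n, hdg, hcards.symm, he⟩
      · left
        have : d.erase n = g := Finset.eq_of_subset_of_card_le hdg (by omega)
        rw [← this]
        exact ⟨hcards, he⟩
  · rintro ⟨g, hg, hmg⟩
    have hglt : ∀ x ∈ g, x < n := fun x hx => Finset.mem_range.1 (hI g hg hx)
    have hng : n ∉ g := fun h => lt_irrefl n (hglt n h)
    have hmlt : ∀ x ∈ m, x < n := by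
      intro x hx
      rcases hmg with ⟨_, hle⟩ | ⟨_, d, hd, _, hle⟩
      · obtain ⟨b, hb, hab⟩ := eqCardLe_exists hle hx
        exact lt_of_le_of_lt hab (hglt b hb)
      · obtain ⟨b, hb, hab⟩ := eqCardLe_exists hle hx
        exact lt_of_le_of_lt hab (hglt b (hd hb))
    have hnm : n ∉ m := fun h => lt_irrefl n (hmlt n h)
    refine ⟨insert n m, ⟨⟨insert n g, ⟨g, hg, rfl⟩, ?_⟩, Finset.mem_insert_self n m⟩,
      Finset.erase_insert hnm⟩
    rcases hmg with ⟨hcard, hle⟩ | ⟨hcard, d, hd, hdc, hle⟩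
    · left
      refine ⟨?_, eqCardLe_insert hmlt hglt hle⟩
      rw [Finset.card_insert_of_notMem hnm, Finset.card_insert_of_notMem hng, hcard]
    · right
      have hdlt : ∀ x ∈ d, x < n := fun x hx => hglt x (hd hx)
      have hnd : n ∉ d := fun h => lt_irrefl n (hdlt n h)
      refine ⟨?_, insert n d, Finset.insert_subset_insert _ hd, ?_, eqCardLe_insert hmlt hdlt hle⟩
      · rw [Finset.card_insert_of_notMem hnm, Finset.card_insert_of_notMem hng]
        omega
      · rw [Finset.card_insert_of_notMem hnm, Finset.card_insert_of_notMem hnd, hdc]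
end

section
/- Let G be the downward closure (with respect to ⪯) of a minimal set I_min of negative monomials in n variables, and let G' be the downward closure of {g·V̄_n : g ∈ I_min} among negative monomials in the n+1 variables V̄_0,…,V̄_n. Then #{m ∈ G' : V̄_n divides m} = #{m ∈ G' : V̄_{n−1} divides m}; equivalently, the partial derivatives of the lifted code with respect to V̄_n and V̄_{n−1} have equal dimension (K'_n = K'_{n−1}). -/
open Finset

lemma forall2_append_singleton {l₁ l₂ : List ℕ} {a b : ℕ} (h : l₁.length = l₂.length) :
    List.Forall₂ (· ≤ ·) (l₁ ++ [a]) (l₂ ++ [b]) ↔ List.Forall₂ (· ≤ ·) l₁ l₂ ∧ a ≤ b := by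
  induction l₁ generalizing l₂ with
  | nil =>
    cases l₂ with
    | nil => simp
    | cons y t => simp at h
  | cons x t ih =>
    cases l₂ with
    | nil => simp at h
    | cons y t₂ =>
      simp only [List.cons_append, List.forall₂_cons, ih (by simpa using h)]
      tauto

lemma sort_insert_max {s : Finset ℕ} {a : ℕ} (h : ∀ b ∈ s, b < a) :
    (insert a s).sort (· ≤ ·) = s.sort (· ≤ ·) ++ [a] := by
  have ha : a ∉ s := fun hmem => lt_irrefl a (h a hmem)
  have hnd : (s.sort (· ≤ ·) ++ [a]).Nodup := by
    rw [List.nodup_append]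
    refine ⟨Finset.sort_nodup _ _, List.nodup_singleton a, ?_⟩
    intro x hx y hy hxy
    rw [List.mem_singleton] at hy
    subst hy
    subst hxy
    exact ha ((Finset.mem_sort _).1 hx)
  have hsorted : (s.sort (· ≤ ·) ++ [a]).Pairwise (· ≤ ·) := by
    rw [List.pairwise_append]
    refine ⟨Finset.pairwise_sort _ _, List.pairwise_singleton _ _, ?_⟩
    intro x hx y hy
    rw [List.mem_singleton] at hy
    subst hy
    exact le_of_lt (h x ((Finset.mem_sort _).1 hx))
  have key := (List.toFinset_sort (· ≤ ·) hnd).2 hsorted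
  have : (s.sort (· ≤ ·) ++ [a]).toFinset = insert a s := by
    rw [List.toFinset_append, Finset.sort_toFinset]
    ext x; simp [or_comm]
  rw [this] at key
  exact key

lemma sort_erase_append {m : Finset ℕ} {a : ℕ} (ha : a ∈ m)
    (hmax : ∀ b ∈ m, b ≠ a → b < a) :
    m.sort (· ≤ ·) = (m.erase a).sort (· ≤ ·) ++ [a] := by
  conv_lhs => rw [← Finset.insert_erase ha]
  exact sort_insert_max fun b hb =>
    hmax b (Finset.mem_of_mem_erase hb) (Finset.ne_of_mem_erase hb)

lemma eqCardLe_subset_range {m m' : Finset ℕ} {N : ℕ} (h : eqCardLe m m')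
    (h' : m' ⊆ Finset.range N) : m ⊆ Finset.range N := by
  intro a ha
  rw [← Finset.mem_sort (· ≤ ·)] at ha
  obtain ⟨i, hi⟩ := List.mem_iff_get.1 ha
  unfold eqCardLe at h
  have hlen := h.length_eq
  rw [List.forall₂_iff_get] at h
  have h2 := h.2 i.val i.isLt (hlen ▸ i.isLt)
  have hmem : (m'.sort (· ≤ ·)).get ⟨i.val, hlen ▸ i.isLt⟩ ∈ m' :=
    (Finset.mem_sort _).1 (List.get_mem _ _)
  have ha2 : a ≤ (m'.sort (· ≤ ·)).get ⟨i.val, hlen ▸ i.isLt⟩ := by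
    rw [← hi]; exact h2
  have hN := h' hmem
  rw [Finset.mem_range] at hN ⊢
  omega

lemma mle_range {n : ℕ} {g m : Finset ℕ} (hg : g ⊆ Finset.range n)
    (hm : mle m (insert n g)) : m ⊆ Finset.range (n + 1) := by
  have hins : insert n g ⊆ Finset.range (n + 1) := by
    intro a ha
    rcases Finset.mem_insert.1 ha with rfl | h
    · exact Finset.mem_range.2 (Nat.lt_succ_self _)
    · exact Finset.mem_range.2 (Nat.lt_succ_of_lt (Finset.mem_range.1 (hg h)))
  rcases hm with ⟨_, h⟩ | ⟨_, d, hd, _, h⟩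
  · exact eqCardLe_subset_range h hins
  · exact eqCardLe_subset_range h (hd.trans hins)

lemma mle_down {n : ℕ} (hn : 1 ≤ n) {g m : Finset ℕ} (hg : g ⊆ Finset.range n)
    (hm : mle m (insert n g)) (h1 : n ∈ m) (h2 : n - 1 ∉ m) :
    mle (insert (n - 1) (m.erase n)) (insert n g) := by
  have hrange := mle_range hg hm
  have hlt : ∀ b ∈ m.erase n, b < n := fun b hb => by
    have hbn := Finset.mem_range.1 (hrange (Finset.mem_of_mem_erase hb))
    have := Finset.ne_of_mem_erase hb
    omega
  have hlt' : ∀ b ∈ m.erase n, b < n - 1 := fun b hb => by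
    have := hlt b hb
    have hne : b ≠ n - 1 := fun e => h2 (e ▸ Finset.mem_of_mem_erase hb)
    omega
  have hsm : m.sort (· ≤ ·) = (m.erase n).sort (· ≤ ·) ++ [n] :=
    sort_erase_append h1 (fun b hb hne => hlt b (Finset.mem_erase.2 ⟨hne, hb⟩))
  have hnot : n - 1 ∉ m.erase n := fun h => h2 (Finset.mem_of_mem_erase h)
  have hsm₂ : (insert (n - 1) (m.erase n)).sort (· ≤ ·)
      = (m.erase n).sort (· ≤ ·) ++ [n - 1] := sort_insert_max hlt'
  have hmpos : 1 ≤ m.card := Finset.card_pos.2 ⟨n, h1⟩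
  have hcard₂ : (insert (n - 1) (m.erase n)).card = m.card := by
    rw [Finset.card_insert_of_notMem hnot, Finset.card_erase_of_mem h1]
    omega
  have hgn : ∀ b ∈ g, b < n := fun b hb => Finset.mem_range.1 (hg hb)
  have hng : n ∉ g := fun h => lt_irrefl n (hgn n h)
  have hsM : (insert n g).sort (· ≤ ·) = g.sort (· ≤ ·) ++ [n] := sort_insert_max hgn
  rcases hm with ⟨hc, h⟩ | ⟨hc, d, hd, hdc, h⟩
  · left
    refine ⟨hcard₂ ▸ hc, ?_⟩
    unfold eqCardLe at h ⊢
    rw [hsm, hsM] at h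
    rw [hsm₂, hsM]
    have hlen : ((m.erase n).sort (· ≤ ·)).length = (g.sort (· ≤ ·)).length := by
      rw [Finset.length_sort, Finset.length_sort, Finset.card_erase_of_mem h1]
      rw [Finset.card_insert_of_notMem hng] at hc
      omega
    rw [forall2_append_singleton hlen] at h
    exact (forall2_append_singleton hlen).2 ⟨h.1, by omega⟩
  · right
    have hdne : d.Nonempty := Finset.card_pos.1 (by omega)
    set a := d.max' hdne with hadef
    have hamem : a ∈ d := d.max'_mem hdne
    have hdmax : ∀ b ∈ d, b ≠ a → b < a := fun b hb hne =>
      lt_of_le_of_ne (d.le_max' b hb) hne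
    have hsd : d.sort (· ≤ ·) = (d.erase a).sort (· ≤ ·) ++ [a] :=
      sort_erase_append hamem hdmax
    have hlen : ((m.erase n).sort (· ≤ ·)).length = ((d.erase a).sort (· ≤ ·)).length := by
      rw [Finset.length_sort, Finset.length_sort, Finset.card_erase_of_mem h1,
        Finset.card_erase_of_mem hamem, hdc]
    unfold eqCardLe at h
    rw [hsm, hsd, forall2_append_singleton hlen] at h
    have haN : a ≤ n := by
      rcases Finset.mem_insert.1 (hd hamem) with rfl | hh
      · exact le_refl _
      · exact le_of_lt (hgn _ hh)
    refine ⟨by omega, d, hd, by omega, ?_⟩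
    unfold eqCardLe
    rw [hsm₂, hsd, forall2_append_singleton hlen]
    exact ⟨h.1, by omega⟩

lemma mle_up {n : ℕ} (hn : 1 ≤ n) {g m : Finset ℕ} (hg : g ⊆ Finset.range n)
    (hm : mle m (insert n g)) (h1 : n - 1 ∈ m) (h2 : n ∉ m) :
    mle (insert n (m.erase (n - 1))) (insert n g) := by
  have hrange := mle_range hg hm
  have hle : ∀ b ∈ m, b < n := fun b hb => by
    have := Finset.mem_range.1 (hrange hb)
    have : b ≠ n := fun e => h2 (e ▸ hb)
    omega
  have hle' : ∀ b ∈ m, b < n := fun b hb => by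
    have h' := Finset.mem_range.1 (hrange hb)
    have hbn : b ≠ n := fun e => h2 (e ▸ hb)
    omega
  have hsm : m.sort (· ≤ ·) = (m.erase (n - 1)).sort (· ≤ ·) ++ [n - 1] :=
    sort_erase_append h1 (fun b hb hne => by have := hle' b hb; omega)
  have hnot : n ∉ m.erase (n - 1) := fun h => h2 (Finset.mem_of_mem_erase h)
  have hsm₂ : (insert n (m.erase (n - 1))).sort (· ≤ ·)
      = (m.erase (n - 1)).sort (· ≤ ·) ++ [n] :=
    sort_insert_max (fun b hb => hle' b (Finset.mem_of_mem_erase hb))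
  have hmpos : 1 ≤ m.card := Finset.card_pos.2 ⟨n - 1, h1⟩
  have hcard₂ : (insert n (m.erase (n - 1))).card = m.card := by
    rw [Finset.card_insert_of_notMem hnot, Finset.card_erase_of_mem h1]
    omega
  have hgn : ∀ b ∈ g, b < n := fun b hb => Finset.mem_range.1 (hg hb)
  have hng : n ∉ g := fun h => lt_irrefl n (hgn n h)
  have hsM : (insert n g).sort (· ≤ ·) = g.sort (· ≤ ·) ++ [n] := sort_insert_max hgn
  rcases hm with ⟨hc, h⟩ | ⟨hc, d, hd, hdc, h⟩
  · left
    refine ⟨hcard₂ ▸ hc, ?_⟩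
    unfold eqCardLe at h ⊢
    rw [hsm, hsM] at h
    rw [hsm₂, hsM]
    have hlen : ((m.erase (n - 1)).sort (· ≤ ·)).length = (g.sort (· ≤ ·)).length := by
      rw [Finset.length_sort, Finset.length_sort, Finset.card_erase_of_mem h1]
      rw [Finset.card_insert_of_notMem hng] at hc
      omega
    rw [forall2_append_singleton hlen] at h
    exact (forall2_append_singleton hlen).2 ⟨h.1, le_refl n⟩
  · right
    have hdne : d.Nonempty := Finset.card_pos.1 (by omega)
    set a := d.max' hdne with hadef
    have hamem : a ∈ d := d.max'_mem hdne
    have hdmax : ∀ b ∈ d, b ≠ a → b < a := fun b hb hne =>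
      lt_of_le_of_ne (d.le_max' b hb) hne
    have hsd : d.sort (· ≤ ·) = (d.erase a).sort (· ≤ ·) ++ [a] :=
      sort_erase_append hamem hdmax
    have hlen : ((m.erase (n - 1)).sort (· ≤ ·)).length
        = ((d.erase a).sort (· ≤ ·)).length := by
      rw [Finset.length_sort, Finset.length_sort, Finset.card_erase_of_mem h1,
        Finset.card_erase_of_mem hamem, hdc]
    unfold eqCardLe at h
    rw [hsm, hsd, forall2_append_singleton hlen] at h
    have haN : a ≤ n := by
      rcases Finset.mem_insert.1 (hd hamem) with rfl | hh
      · exact le_refl _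
      · exact le_of_lt (hgn _ hh)
    have hnda : n ∉ d.erase a := fun hh => by
      have := hdmax n (Finset.mem_of_mem_erase hh) (Finset.ne_of_mem_erase hh)
      omega
    have hsd₂ : (insert n (d.erase a)).sort (· ≤ ·)
        = (d.erase a).sort (· ≤ ·) ++ [n] :=
      sort_insert_max (fun b hb => lt_of_lt_of_le
        (hdmax b (Finset.mem_of_mem_erase hb) (Finset.ne_of_mem_erase hb)) haN)
    have hdapos : 1 ≤ d.card := Finset.card_pos.2 ⟨a, hamem⟩
    have hcd₂ : (insert n (d.erase a)).card = d.card := by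
      rw [Finset.card_insert_of_notMem hnda, Finset.card_erase_of_mem hamem]
      omega
    refine ⟨by omega, insert n (d.erase a),
      Finset.insert_subset (Finset.mem_insert_self _ _)
        ((Finset.erase_subset _ _).trans hd), by omega, ?_⟩
    unfold eqCardLe
    rw [hsm₂, hsd₂, forall2_append_singleton hlen]
    exact ⟨h.1, le_refl n⟩

/-- With `G'` the downward closure of `{g·V̄_n : g ∈ I_min}` in `n+1`
variables, the number of monomials of `G'` divisible by `V̄_n` equals the number divisible
by `V̄_{n-1}`; i.e. `K'_n = K'_{n-1}`. -/
theorem stmt2 (n : ℕ) (hn : 1 ≤ n) (Imin : Set (Finset ℕ))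
    (hI : ∀ m ∈ Imin, m ⊆ Finset.range n) :
    {m ∈ dcl ((fun g => insert n g) '' Imin) | n ∈ m}.ncard =
      {m ∈ dcl ((fun g => insert n g) '' Imin) | n - 1 ∈ m}.ncard := by
  have hGmem : ∀ m, m ∈ dcl ((fun g => insert n g) '' Imin) ↔
      ∃ g ∈ Imin, mle m (insert n g) := by
    intro m
    constructor
    · rintro ⟨g₀, ⟨g, hgI, rfl⟩, hmle⟩; exact ⟨g, hgI, hmle⟩
    · rintro ⟨g, hgI, hmle⟩; exact ⟨insert n g, ⟨g, hgI, rfl⟩, hmle⟩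
  set φ : Finset ℕ → Finset ℕ :=
    fun m => if n - 1 ∈ m then m else insert (n - 1) (m.erase n) with hφ
  have hinj : Set.InjOn φ {m ∈ dcl ((fun g => insert n g) '' Imin) | n ∈ m} := by
    rintro m₁ ⟨hG₁, hn₁⟩ m₂ ⟨hG₂, hn₂⟩ heq
    simp only [hφ] at heq
    by_cases c₁ : n - 1 ∈ m₁ <;> by_cases c₂ : n - 1 ∈ m₂
    · simpa [c₁, c₂] using heq
    · rw [if_pos c₁, if_neg c₂] at heq
      exfalso
      have hmem : n ∈ insert (n - 1) (m₂.erase n) := heq ▸ hn₁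
      rcases Finset.mem_insert.1 hmem with h | h
      · omega
      · exact Finset.ne_of_mem_erase h rfl
    · rw [if_neg c₁, if_pos c₂] at heq
      exfalso
      have hmem : n ∈ insert (n - 1) (m₁.erase n) := heq.symm ▸ hn₂
      rcases Finset.mem_insert.1 hmem with h | h
      · omega
      · exact Finset.ne_of_mem_erase h rfl
    · rw [if_neg c₁, if_neg c₂] at heq
      have e₁ : n - 1 ∉ m₁.erase n := fun h => c₁ (Finset.mem_of_mem_erase h)
      have e₂ : n - 1 ∉ m₂.erase n := fun h => c₂ (Finset.mem_of_mem_erase h)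
      have h3 : m₁.erase n = m₂.erase n := by
        have := congrArg (fun s => Finset.erase s (n - 1)) heq
        simpa [Finset.erase_insert e₁, Finset.erase_insert e₂] using this
      calc m₁ = insert n (m₁.erase n) := (Finset.insert_erase hn₁).symm
        _ = insert n (m₂.erase n) := by rw [h3]
        _ = m₂ := Finset.insert_erase hn₂
  have himg : φ '' {m ∈ dcl ((fun g => insert n g) '' Imin) | n ∈ m}
      = {m ∈ dcl ((fun g => insert n g) '' Imin) | n - 1 ∈ m} := by
    ext m
    constructor
    · rintro ⟨m₀, ⟨hG₀, hn₀⟩, rfl⟩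
      by_cases c : n - 1 ∈ m₀
      · have he : φ m₀ = m₀ := by simp [hφ, c]
        rw [he]
        exact ⟨hG₀, c⟩
      · simp only [hφ, if_neg c]
        obtain ⟨g, hgI, hmle⟩ := (hGmem m₀).1 hG₀
        exact ⟨(hGmem _).2 ⟨g, hgI, mle_down hn (hI g hgI) hmle hn₀ c⟩,
          Finset.mem_insert_self _ _⟩
    · rintro ⟨hGm, hm⟩
      by_cases c : n ∈ m
      · exact ⟨m, ⟨hGm, c⟩, by simp [hφ, hm]⟩
      · obtain ⟨g, hgI, hmle⟩ := (hGmem m).1 hGm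
        refine ⟨insert n (m.erase (n - 1)),
          ⟨(hGmem _).2 ⟨g, hgI, mle_up hn (hI g hgI) hmle hm c⟩,
            Finset.mem_insert_self _ _⟩, ?_⟩
        have hne : n - 1 ∉ insert n (m.erase (n - 1)) := by
          rw [Finset.mem_insert]
          push_neg
          exact ⟨by omega, Finset.notMem_erase _ _⟩
        have hnm : n ∉ m.erase (n - 1) := fun h => c (Finset.mem_of_mem_erase h)
        simp only [hφ, if_neg hne]
        rw [Finset.erase_insert hnm, Finset.insert_erase hm]
  rw [← himg, Set.ncard_image_of_injOn hinj]
end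

section
/- Let G be a decreasing set of negative monomials in the n variables V̄_0,…,V̄_{n−1}. Then for all indices 0 ≤ i ≤ j ≤ n−1, #{m ∈ G : V̄_j divides m} ≤ #{m ∈ G : V̄_i divides m}. Consequently the partial derivative dimensions satisfy K_0 ≥ K_1 ≥ … ≥ K_{n−1}. -/
open Finset

lemma count_to_eqCardLe (s t : Finset ℕ) (hc : s.card = t.card)
    (h : ∀ k, (t.filter (· ≤ k)).card ≤ (s.filter (· ≤ k)).card) : eqCardLe s t := by
  rw [eqCardLe, List.forall₂_iff_get]
  refine ⟨by simp [hc], ?_⟩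
  intro l h1 h2
  by_contra hab
  push_neg at hab
  set a := (s.sort (· ≤ ·)).get ⟨l, h1⟩ with ha
  set b := (t.sort (· ≤ ·)).get ⟨l, h2⟩ with hb
  have claim1 : l + 1 ≤ (t.filter (· ≤ b)).card := by
    have hsub : ((t.sort (· ≤ ·)).take (l+1)).toFinset ⊆ t.filter (· ≤ b) := by
      intro x hx
      rw [List.mem_toFinset, List.mem_take_iff_getElem] at hx
      obtain ⟨p, hp, hpx⟩ := hx
      have hp2 : p < (t.sort (· ≤ ·)).length := lt_of_lt_of_le hp (min_le_right _ _)
      have hple : (⟨p, hp2⟩ : Fin _) ≤ (⟨l, h2⟩ : Fin _) := by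
        simp only [Fin.le_def]; omega
      have hmono := (Finset.pairwise_sort t (· ≤ ·)).rel_get_of_le hple
      rw [Finset.mem_filter]
      refine ⟨?_, ?_⟩
      · rw [← Finset.mem_sort (α := ℕ) (· ≤ ·), ← hpx]
        exact List.getElem_mem _
      · simpa [← hpx, List.get_eq_getElem, hb] using hmono
    calc l + 1 = ((t.sort (· ≤ ·)).take (l+1)).toFinset.card := by
            rw [List.toFinset_card_of_nodup ((List.take_sublist _ _).nodup (Finset.sort_nodup _ _))]
            rw [List.length_take]
            omega
      _ ≤ _ := Finset.card_le_card hsub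
  have claim2 : (s.filter (· ≤ b)).card ≤ l := by
    have hsub : s.filter (· ≤ b) ⊆ ((s.sort (· ≤ ·)).take l).toFinset := by
      intro x hx
      rw [Finset.mem_filter] at hx
      obtain ⟨hxs, hxb⟩ := hx
      have : x ∈ s.sort (· ≤ ·) := by rwa [Finset.mem_sort]
      rw [List.mem_iff_get] at this
      obtain ⟨p, hpx⟩ := this
      have hpl : p.val < l := by
        by_contra hge
        push_neg at hge
        have hple : (⟨l, h1⟩ : Fin _) ≤ p := by simp only [Fin.le_def]; omega
        have hmono := (Finset.pairwise_sort s (· ≤ ·)).rel_get_of_le hple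
        rw [hpx, ← ha] at hmono
        omega
      rw [List.mem_toFinset, List.mem_take_iff_getElem]
      exact ⟨p.val, by omega, by simpa [List.get_eq_getElem] using hpx⟩
    calc (s.filter (· ≤ b)).card ≤ ((s.sort (· ≤ ·)).take l).toFinset.card :=
          Finset.card_le_card hsub
      _ ≤ ((s.sort (· ≤ ·)).take l).length := List.toFinset_card_le _
      _ ≤ l := List.length_take_le _ _
  have := h b
  omega

lemma key_mle {i j : ℕ} (hij : i < j) {m : Finset ℕ} (hjm : j ∈ m) (him : i ∉ m) :
    mle (insert i (m.erase j)) m := by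
  have hie : i ∉ m.erase j := fun h => him (Finset.mem_of_mem_erase h)
  have hcard : (insert i (m.erase j)).card = m.card := by
    rw [Finset.card_insert_of_notMem hie, Finset.card_erase_add_one hjm]
  left
  refine ⟨hcard, ?_⟩
  apply count_to_eqCardLe _ _ hcard
  intro k
  by_cases hk : j ≤ k
  · have h1 : m.filter (· ≤ k) = insert j ((m.erase j).filter (· ≤ k)) := by
      ext x
      simp only [Finset.mem_filter, Finset.mem_insert, Finset.mem_erase]
      constructor
      · rintro ⟨hx, hxk⟩
        by_cases hxj : x = j
        · exact Or.inl hxj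
        · exact Or.inr ⟨⟨hxj, hx⟩, hxk⟩
      · rintro (rfl | ⟨⟨_, hx⟩, hxk⟩)
        · exact ⟨hjm, hk⟩
        · exact ⟨hx, hxk⟩
    have h2 : (insert i (m.erase j)).filter (· ≤ k) =
        insert i ((m.erase j).filter (· ≤ k)) := by
      ext x
      simp only [Finset.mem_filter, Finset.mem_insert]
      constructor
      · rintro ⟨(rfl | hx), hxk⟩
        · exact Or.inl rfl
        · exact Or.inr ⟨hx, hxk⟩
      · rintro (rfl | ⟨hx, hxk⟩)
        · exact ⟨Or.inl rfl, le_trans (le_of_lt hij) hk⟩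
        · exact ⟨Or.inr hx, hxk⟩
    rw [h1, h2, Finset.card_insert_of_notMem (by simp), Finset.card_insert_of_notMem
      (fun h => hie (Finset.mem_of_mem_filter _ h))]
  · push_neg at hk
    apply Finset.card_le_card
    intro x hx
    rw [Finset.mem_filter] at hx ⊢
    obtain ⟨hxm, hxk⟩ := hx
    have hxj : x ≠ j := by omega
    exact ⟨Finset.mem_insert_of_mem (Finset.mem_erase.mpr ⟨hxj, hxm⟩), hxk⟩

/-- For a decreasing set `G` of negative monomials in `n` variables, the
partial derivative dimensions are nonincreasing: for `i ≤ j ≤ n-1`,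
`#{m ∈ G : V̄_j ∣ m} ≤ #{m ∈ G : V̄_i ∣ m}`. -/
theorem stmt3 (n : ℕ) (hn : 1 ≤ n) (G : Set (Finset ℕ))
    (hG : ∀ m ∈ G, m ⊆ Finset.range n) (hdec : Decreasing G)
    (i j : ℕ) (hij : i ≤ j) (hj : j ≤ n - 1) :
    {m ∈ G | j ∈ m}.ncard ≤ {m ∈ G | i ∈ m}.ncard := by
  rcases eq_or_lt_of_le hij with rfl | hlt
  · exact le_refl _
  classical
  set φ : Finset ℕ → Finset ℕ := fun m => if i ∈ m then m else insert i (m.erase j) with hφ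
  have hfin : {m ∈ G | i ∈ m}.Finite := by
    apply Set.Finite.subset (Finset.range n).powerset.finite_toSet
    intro m hm
    simp only [Finset.coe_powerset, Set.mem_preimage, Set.mem_powerset_iff]
    exact_mod_cast hG m hm.1
  apply Set.ncard_le_ncard_of_injOn φ ?_ ?_ hfin
  · rintro m ⟨hmG, hjm⟩
    by_cases him : i ∈ m
    · simp only [hφ, if_pos him]; exact ⟨hmG, him⟩
    · simp only [hφ, if_neg him]
      exact ⟨hdec _ m (key_mle hlt hjm him) hmG, Finset.mem_insert_self _ _⟩
  · rintro m₁ ⟨hm₁G, hjm₁⟩ m₂ ⟨hm₂G, hjm₂⟩ heq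
    simp only [hφ] at heq
    have hne : ∀ m : Finset ℕ, j ∈ m → i ∉ m → j ∉ insert i (m.erase j) := by
      intro m hjm him hmem
      rcases Finset.mem_insert.mp hmem with h | h
      · omega
      · exact (Finset.mem_erase.mp h).1 rfl
    by_cases h1 : i ∈ m₁ <;> by_cases h2 : i ∈ m₂ <;>
      simp only [if_pos, if_neg, h1, h2, if_true, if_false] at heq
    · exact heq
    · exact absurd (heq ▸ hjm₁) (hne m₂ hjm₂ h2)
    · exact absurd (heq ▸ hjm₂) (hne m₁ hjm₁ h1)
    · have : m₁.erase j = m₂.erase j := by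
        have := congrArg (Finset.erase · i) heq
        simpa [Finset.erase_insert (fun h => h1 (Finset.mem_of_mem_erase h)),
          Finset.erase_insert (fun h => h2 (Finset.mem_of_mem_erase h))] using this
      have := congrArg (insert j ·) this
      simpa [Finset.insert_erase hjm₁, Finset.insert_erase hjm₂] using this
end

section
/- Let G be a decreasing set of negative monomials in n variables and suppose the associated monomial code has symmetry t with 1 ≤ t ≤ n−1, i.e., exactly t of the partial derivative dimensions K_0,…,K_{n−1} attain the minimum. Then the set of minimizing indices is exactly {n−t, n−t+1, …, n−1}, and K_{n−t−1} > K_{n−t} = K_{n−t+1} = … = K_{n−1}. -/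
open Finset

theorem stmt4_sorted_getElem_le_iff {L : List ℕ} (hL : L.Pairwise (· ≤ ·)) {k : ℕ}
    (hk : k < L.length) (x : ℕ) :
    L[k] ≤ x ↔ k < L.countP (fun a => a ≤ x) := by
  have hmono : Monotone L.get := fun _ _ h => hL.rel_get_of_le h
  constructor
  · intro h
    have h2 : (L.take (k+1)).countP (fun a => a ≤ x) = k+1 := by
      rw [List.countP_eq_length.2, List.length_take, min_eq_left hk]
      intro a ha
      rw [List.mem_iff_getElem] at ha
      obtain ⟨i, hi, rfl⟩ := ha
      simp only [List.length_take] at hi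
      have hik : i ≤ k := Nat.lt_succ_iff.1 (lt_of_lt_of_le hi (min_le_left _ _))
      have hiL : i < L.length := lt_of_le_of_lt hik hk
      simp only [List.getElem_take]
      have : L[i] ≤ L[k] := hmono (a := ⟨i, hiL⟩) (b := ⟨k, hk⟩) hik
      simpa using le_trans this h
    calc k < k + 1 := Nat.lt_succ_self k
      _ = (L.take (k+1)).countP (fun a => a ≤ x) := h2.symm
      _ ≤ L.countP (fun a => a ≤ x) := by
          conv_rhs => rw [← List.take_append_drop (k+1) L]
          rw [List.countP_append]; exact Nat.le_add_right _ _
  · intro h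
    by_contra hx
    push_neg at hx
    have h3 : (L.drop k).countP (fun a => a ≤ x) = 0 := by
      rw [List.countP_eq_zero]
      intro a ha
      rw [List.mem_iff_getElem] at ha
      obtain ⟨i, hi, rfl⟩ := ha
      simp only [List.length_drop] at hi
      have hiL : k + i < L.length := by omega
      have : L[k] ≤ L[k+i] := hmono (a := ⟨k, hk⟩) (b := ⟨k+i, hiL⟩) (Nat.le_add_right _ _)
      simp only [List.getElem_drop]
      simp only [decide_eq_true_eq]
      omega
    have : L.countP (fun a => a ≤ x) ≤ k := by
      conv_lhs => rw [← List.take_append_drop k L]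
      rw [List.countP_append, h3, Nat.add_zero]
      exact le_trans List.countP_le_length (by simp)
    omega

theorem stmt4_countP_sort (A : Finset ℕ) (x : ℕ) :
    (A.sort (· ≤ ·)).countP (fun a => a ≤ x) = (A.filter (· ≤ x)).card := by
  rw [List.Perm.countP_eq _ (A.sort_perm_toList (· ≤ ·))]
  rw [← Multiset.coe_countP, Finset.coe_toList, Multiset.countP_eq_card_filter]
  rfl

theorem stmt4_eqCardLe_of_counts {A B : Finset ℕ} (h : A.card = B.card)
    (hc : ∀ x, (B.filter (· ≤ x)).card ≤ (A.filter (· ≤ x)).card) : eqCardLe A B := by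
  rw [eqCardLe, List.forall₂_iff_get]
  have hlen : (A.sort (· ≤ ·)).length = (B.sort (· ≤ ·)).length := by
    simp [Finset.length_sort, h]
  refine ⟨hlen, fun k h1 h2 => ?_⟩
  simp only [List.get_eq_getElem]
  set x := (B.sort (· ≤ ·))[k] with hx
  have hBx : (B.sort (· ≤ ·))[k] ≤ x := le_refl _
  rw [stmt4_sorted_getElem_le_iff (B.pairwise_sort (· ≤ ·)) h2, stmt4_countP_sort] at hBx
  have h3 := lt_of_lt_of_le hBx (hc x)
  rw [← stmt4_countP_sort] at h3
  exact (stmt4_sorted_getElem_le_iff (A.pairwise_sort (· ≤ ·)) h1 x).2 h3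

theorem stmt4_swap_counts {m : Finset ℕ} {i j : ℕ} (hij : i < j) (hi : i ∉ m) (hj : j ∈ m)
    (x : ℕ) :
    (m.filter (· ≤ x)).card ≤ ((insert i (m.erase j)).filter (· ≤ x)).card := by
  rw [Finset.filter_insert, Finset.filter_erase]
  by_cases hjx : j ≤ x
  · have hix : i ≤ x := le_trans hij.le hjx
    rw [if_pos hix]
    have hjm : j ∈ m.filter (· ≤ x) := mem_filter.2 ⟨hj, hjx⟩
    have hin : i ∉ (m.filter (· ≤ x)).erase j := fun hmem =>
      hi (Finset.mem_of_mem_filter _ (Finset.mem_of_mem_erase hmem))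
    rw [Finset.card_insert_of_notMem hin, Finset.card_erase_of_mem hjm]
    have h1 : 1 ≤ (m.filter (· ≤ x)).card := Finset.card_pos.2 ⟨j, hjm⟩
    omega
  · have hjnot : j ∉ m.filter (· ≤ x) := fun hmem => hjx (mem_filter.1 hmem).2
    rw [Finset.erase_eq_of_notMem hjnot]
    split_ifs with hix
    · exact Finset.card_le_card (Finset.subset_insert _ _)
    · exact le_refl _

theorem stmt4_swap_card {m : Finset ℕ} {i j : ℕ} (hi : i ∉ m) (hj : j ∈ m) :
    (insert i (m.erase j)).card = m.card := by
  rw [Finset.card_insert_of_notMem (fun h => hi (Finset.mem_of_mem_erase h)),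
    Finset.card_erase_of_mem hj]
  have : 1 ≤ m.card := Finset.card_pos.2 ⟨j, hj⟩
  omega

theorem stmt4_swap_mem {G : Set (Finset ℕ)} (hdec : Decreasing G) {m : Finset ℕ} {i j : ℕ}
    (hij : i < j) (hi : i ∉ m) (hj : j ∈ m) (hm : m ∈ G) : insert i (m.erase j) ∈ G := by
  refine hdec _ m (Or.inl ⟨stmt4_swap_card hi hj, ?_⟩) hm
  exact stmt4_eqCardLe_of_counts (stmt4_swap_card hi hj) (stmt4_swap_counts hij hi hj)

theorem stmt4_Kdim_antitone {G : Set (Finset ℕ)} (hGfin : G.Finite) (hdec : Decreasing G)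
    {i j : ℕ} (hij : i ≤ j) : Kdim G j ≤ Kdim G i := by
  rcases eq_or_lt_of_le hij with rfl | hlt
  · exact le_refl _
  have htfin : {m ∈ G | i ∈ m}.Finite := hGfin.subset (fun m hm => hm.1)
  refine Set.ncard_le_ncard_of_injOn (fun m => if i ∈ m then m else insert i (m.erase j))
    ?_ ?_ htfin
  · rintro m ⟨hmG, hjm⟩
    by_cases him : i ∈ m
    · simp only [if_pos him]; exact ⟨hmG, him⟩
    · simp only [if_neg him]
      exact ⟨stmt4_swap_mem hdec hlt him hjm hmG, Finset.mem_insert_self _ _⟩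
  · rintro m1 ⟨hm1G, hjm1⟩ m2 ⟨hm2G, hjm2⟩ heq
    simp only at heq
    by_cases h1 : i ∈ m1 <;> by_cases h2 : i ∈ m2 <;>
      [rw [if_pos h1, if_pos h2] at heq; rw [if_pos h1, if_neg h2] at heq;
       rw [if_neg h1, if_pos h2] at heq; rw [if_neg h1, if_neg h2] at heq]
    · exact heq
    · exfalso
      have : j ∈ insert i (m2.erase j) := heq ▸ hjm1
      rcases Finset.mem_insert.1 this with h | h
      · omega
      · exact (Finset.notMem_erase _ _) h
    · exfalso
      have : j ∈ insert i (m1.erase j) := heq ▸ hjm2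
      rcases Finset.mem_insert.1 this with h | h
      · omega
      · exact (Finset.notMem_erase _ _) h
    · have he : m1.erase j = m2.erase j := by
        have := congrArg (Finset.erase · i) heq
        simpa [Finset.erase_insert (fun h => h1 (Finset.mem_of_mem_erase h)),
          Finset.erase_insert (fun h => h2 (Finset.mem_of_mem_erase h))] using this
      calc m1 = insert j (m1.erase j) := (Finset.insert_erase hjm1).symm
        _ = insert j (m2.erase j) := by rw [he]
        _ = m2 := Finset.insert_erase hjm2

/-- If a decreasing monomial code in `n` variables has symmetry `t`
(`1 ≤ t ≤ n-1`), i.e. exactly `t` of the `K_i` attain the minimum, then the minimizing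
indices are exactly `{n-t,…,n-1}`, the values `K_{n-t},…,K_{n-1}` coincide, and
`K_{n-t-1} > K_{n-t}`. -/
theorem stmt4 (n : ℕ) (G : Set (Finset ℕ)) (hG : ∀ m ∈ G, m ⊆ Finset.range n)
    (hdec : Decreasing G) (t : ℕ) (ht1 : 1 ≤ t) (ht2 : t ≤ n - 1)
    (ht : ((Finset.range n).filter
      (fun i => ∀ j ∈ Finset.range n, Kdim G i ≤ Kdim G j)).card = t) :
    ((Finset.range n).filter
        (fun i => ∀ j ∈ Finset.range n, Kdim G i ≤ Kdim G j)) = Finset.Ico (n - t) n ∧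
    (∀ j ∈ Finset.Ico (n - t) n, Kdim G j = Kdim G (n - 1)) ∧
    Kdim G (n - t) < Kdim G (n - t - 1) := by
  have hn2 : 2 ≤ n := by omega
  have hGfin : G.Finite := by
    apply Set.Finite.subset (Finset.range n).powerset.finite_toSet
    intro m hm
    exact Finset.mem_coe.2 (Finset.mem_powerset.2 (hG m hm))
  have hanti : ∀ {i j : ℕ}, i ≤ j → Kdim G j ≤ Kdim G i :=
    fun hij => stmt4_Kdim_antitone hGfin hdec hij
  set S := (Finset.range n).filter
      (fun i => ∀ j ∈ Finset.range n, Kdim G i ≤ Kdim G j) with hS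
  have hup : ∀ i ∈ S, ∀ k, i ≤ k → k < n → k ∈ S := by
    intro i hi k hik hkn
    rw [hS, Finset.mem_filter] at hi ⊢
    exact ⟨Finset.mem_range.2 hkn, fun j hj =>
      le_trans (hanti hik) (hi.2 j hj)⟩
  have hsub : S ⊆ Finset.Ico (n - t) n := by
    intro i hi
    have hin : i < n := Finset.mem_range.1 (Finset.mem_filter.1 hi).1
    have hIco : Finset.Ico i n ⊆ S := by
      intro k hk
      rw [Finset.mem_Ico] at hk
      exact hup i hi k hk.1 hk.2
    have := Finset.card_le_card hIco
    rw [Nat.card_Ico, ht] at this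
    rw [Finset.mem_Ico]
    omega
  have hSeq : S = Finset.Ico (n - t) n := by
    apply Finset.eq_of_subset_of_card_le hsub
    rw [Nat.card_Ico, ht]
    omega
  have hmemS : ∀ j, n - t ≤ j → j < n → j ∈ S := by
    intro j h1 h2
    rw [hSeq, Finset.mem_Ico]; omega
  refine ⟨hSeq, ?_, ?_⟩
  · intro j hj
    rw [Finset.mem_Ico] at hj
    have hjS := hmemS j hj.1 hj.2
    have hn1S := hmemS (n-1) (by omega) (by omega)
    rw [hS, Finset.mem_filter] at hjS hn1S
    exact le_antisymm (hjS.2 (n-1) (Finset.mem_range.2 (by omega)))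
      (hn1S.2 j (Finset.mem_range.2 hj.2))
  · have hntS := hmemS (n - t) (le_refl _) (by omega)
    have hnot : n - t - 1 ∉ S := by
      rw [hSeq, Finset.mem_Ico]; omega
    rw [hS, Finset.mem_filter] at hnot hntS
    push_neg at hnot
    rcases hnot (Finset.mem_range.2 (by omega)) with ⟨j, hj, hjlt⟩
    exact lt_of_le_of_lt (hntS.2 j hj) hjlt
end

section
/- Let G be the downward closure (with respect to ⪯) of a minimal set I_min of negative monomials in n variables, and let G' be the downward closure of {g·V̄_n : g ∈ I_min} among negative monomials in the n+1 variables V̄_0,…,V̄_n. Then the lifted code has symmetry at least 2: at least two of the partial derivative dimensions K'_0,…,K'_n attain the minimum; in particular K'_{n−1} = K'_n and this common value is the minimum. -/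
open Finset

def cnt (m : Finset ℕ) (t : ℕ) : ℕ := (m.filter (fun x => t ≤ x)).card

lemma lcnt_of_forall₂ {a b : List ℕ} (h : List.Forall₂ (· ≤ ·) a b) (t : ℕ) :
    (a.filter (fun z => decide (t ≤ z))).length ≤ (b.filter (fun z => decide (t ≤ z))).length := by
  induction h with
  | nil => simp
  | @cons x y a' b' hxy _ ih =>
    by_cases hx : t ≤ x
    · have hy : t ≤ y := hx.trans hxy
      simp [List.filter_cons, hx, hy]; omega
    · by_cases hy : t ≤ y <;> simp [List.filter_cons, hx, hy] <;> omega

lemma forall₂_of_lcnt : ∀ (a b : List ℕ), a.Pairwise (· ≤ ·) → b.Pairwise (· ≤ ·) →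
    a.length = b.length →
    (∀ t, (a.filter (fun z => decide (t ≤ z))).length ≤ (b.filter (fun z => decide (t ≤ z))).length) →
    List.Forall₂ (· ≤ ·) a b := by
  intro a
  induction a with
  | nil => intro b _ _ hl _; rw [List.length_nil] at hl; rw [List.eq_nil_of_length_eq_zero hl.symm]; exact List.Forall₂.nil
  | cons x a' ih =>
    intro b ha hb hl hc
    cases b with
    | nil => simp at hl
    | cons y b' =>
      rw [List.pairwise_cons] at ha hb
      have hxy : x ≤ y := by
        by_contra hxy
        have h1 := hc x
        have hfa : a'.filter (fun z => decide (x ≤ z)) = a' :=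
          List.filter_eq_self.2 (fun z hz => by simpa using ha.1 z hz)
        have hfb : (y :: b').filter (fun z => decide (x ≤ z)) =
            b'.filter (fun z => decide (x ≤ z)) := by
          simp [List.filter_cons]; omega
        rw [hfb] at h1
        simp [List.filter_cons, hfa] at h1
        have := List.length_filter_le (fun z => decide (x ≤ z)) b'
        simp at hl
        omega
      refine List.Forall₂.cons hxy (ih b' ha.2 hb.2 (by simpa using hl) ?_)
      intro t
      have h1 := hc t
      by_cases htx : t ≤ x
      · have hty : t ≤ y := htx.trans hxy
        simpa [List.filter_cons, htx, hty] using h1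
      · by_cases hty : t ≤ y
        · have : b'.filter (fun z => decide (t ≤ z)) = b' :=
            List.filter_eq_self.2 (fun z hz => by simp; exact hty.trans (hb.1 z hz))
          rw [this]
          have := List.length_filter_le (fun z => decide (t ≤ z)) a'
          simp at hl; omega
        · simpa [List.filter_cons, htx, hty] using h1

lemma cnt_sort (m : Finset ℕ) (t : ℕ) :
    ((m.sort (· ≤ ·)).filter (fun z => decide (t ≤ z))).length = cnt m t := by
  have hperm : (m.sort (· ≤ ·)).Perm m.toList := Finset.sort_perm_toList m (· ≤ ·)
  rw [(hperm.filter _).length_eq]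
  have : cnt m t = Multiset.card (Multiset.filter (fun x => t ≤ x) m.val) := rfl
  rw [this, ← Multiset.countP_eq_card_filter, ← List.countP_eq_length_filter,
    ← Multiset.coe_countP]
  simp [Finset.coe_toList]

lemma cnt_le_card (m : Finset ℕ) (t : ℕ) : cnt m t ≤ m.card :=
  Finset.card_filter_le _ _

lemma eqCardLe_iff {m m' : Finset ℕ} :
    eqCardLe m m' ↔ m.card = m'.card ∧ ∀ t, cnt m t ≤ cnt m' t := by
  constructor
  · intro h
    refine ⟨?_, fun t => ?_⟩
    · have := h.length_eq; simpa using this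
    · rw [← cnt_sort, ← cnt_sort]; exact lcnt_of_forall₂ h t
  · rintro ⟨hc, hcnt⟩
    exact forall₂_of_lcnt _ _ (Finset.pairwise_sort _ _) (Finset.pairwise_sort _ _)
      (by simpa using hc) (fun t => by rw [cnt_sort, cnt_sort]; exact hcnt t)

lemma exists_d (m : Finset ℕ) : ∀ (k : ℕ) (m' : Finset ℕ), m'.card = k →
    m.card ≤ m'.card → (∀ t, cnt m t ≤ cnt m' t) →
    ∃ d ⊆ m', d.card = m.card ∧ ∀ t, cnt m t ≤ cnt d t := by
  intro k
  induction k with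
  | zero =>
    intro m' hk hle hcnt
    exact ⟨m', Finset.Subset.refl _, by omega, hcnt⟩
  | succ k ih =>
    intro m' hk hle hcnt
    by_cases hcard : m.card = m'.card
    · exact ⟨m', Finset.Subset.refl _, hcard.symm, hcnt⟩
    · have hne : m'.Nonempty := Finset.card_pos.1 (by omega)
      set a := m'.min' hne with ha
      have ham : a ∈ m' := Finset.min'_mem _ _
      have hcard'' : (m'.erase a).card = k := by
        rw [Finset.card_erase_of_mem ham]; omega
      have hcnt' : ∀ t, cnt m t ≤ cnt (m'.erase a) t := by
        intro t
        by_cases hta : t ≤ a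
        · have : (m'.erase a).filter (fun x => t ≤ x) = m'.erase a := by
            refine Finset.filter_true_of_mem (fun x hx => ?_)
            exact hta.trans (Finset.min'_le _ _ (Finset.mem_of_mem_erase hx))
          calc cnt m t ≤ m.card := cnt_le_card m t
            _ ≤ k := by omega
            _ = cnt (m'.erase a) t := by rw [cnt, this, hcard'']
        · have : cnt (m'.erase a) t = cnt m' t := by
            rw [cnt, cnt, Finset.filter_erase, Finset.erase_eq_of_notMem]
            simp [hta]
          rw [this]; exact hcnt t
      obtain ⟨d, hd1, hd2, hd3⟩ := ih (m'.erase a) hcard'' (by omega) hcnt'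
      exact ⟨d, hd1.trans (Finset.erase_subset _ _), hd2, hd3⟩

lemma mle_iff {m m' : Finset ℕ} :
    mle m m' ↔ m.card ≤ m'.card ∧ ∀ t, cnt m t ≤ cnt m' t := by
  constructor
  · rintro (⟨hc, he⟩ | ⟨hc, d, hd, hdc, he⟩)
    · exact ⟨hc.le, (eqCardLe_iff.1 he).2⟩
    · refine ⟨hc.le, fun t => ?_⟩
      exact ((eqCardLe_iff.1 he).2 t).trans
        (Finset.card_le_card (Finset.filter_subset_filter _ hd))
  · rintro ⟨hc, hcnt⟩
    rcases eq_or_lt_of_le hc with hc' | hc'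
    · exact Or.inl ⟨hc', eqCardLe_iff.2 ⟨hc', hcnt⟩⟩
    · obtain ⟨d, hd1, hd2, hd3⟩ := exists_d m m'.card m' rfl hc hcnt
      exact Or.inr ⟨hc', d, hd1, hd2, eqCardLe_iff.2 ⟨hd2.symm, hd3⟩⟩

lemma mle_trans {a b c : Finset ℕ} (h1 : mle a b) (h2 : mle b c) : mle a c := by
  rw [mle_iff] at *
  exact ⟨h1.1.trans h2.1, fun t => (h1.2 t).trans (h2.2 t)⟩

lemma cnt_insert {i : ℕ} {s : Finset ℕ} (h : i ∉ s) (t : ℕ) :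
    cnt (insert i s) t = cnt s t + if t ≤ i then 1 else 0 := by
  rw [cnt, cnt, Finset.filter_insert]
  split
  · rw [Finset.card_insert_of_notMem (fun hc => h (Finset.mem_of_mem_filter _ hc))]
  · rw [add_zero]

lemma cnt_erase_add {j : ℕ} {m : Finset ℕ} (h : j ∈ m) (t : ℕ) :
    cnt m t = cnt (m.erase j) t + if t ≤ j then 1 else 0 := by
  conv_lhs => rw [← Finset.insert_erase h]
  exact cnt_insert (Finset.notMem_erase _ _) t

lemma mle_swap {i j : ℕ} {m : Finset ℕ} (hij : i < j) (hj : j ∈ m) (hi : i ∉ m) :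
    mle (insert i (m.erase j)) m := by
  have hie : i ∉ m.erase j := fun h => hi (Finset.mem_of_mem_erase h)
  rw [mle_iff]
  constructor
  · rw [Finset.card_insert_of_notMem hie, Finset.card_erase_of_mem hj]
    have := Finset.card_pos.2 ⟨j, hj⟩
    omega
  · intro t
    rw [cnt_insert hie, cnt_erase_add hj t]
    have : (if t ≤ i then (1:ℕ) else 0) ≤ if t ≤ j then 1 else 0 := by
      split <;> split <;> omega
    omega

lemma mle_topswap {n q : ℕ} {m g' : Finset ℕ} (h : mle m g') (hn : n ∈ g')
    (hmax : ∀ x ∈ m, x ≤ q) (hq : q < n) (hqm : q ∈ m) :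
    mle (insert n (m.erase q)) g' := by
  rw [mle_iff] at h ⊢
  have hne : n ∉ m.erase q := fun hc => by
    have := hmax n (Finset.mem_of_mem_erase hc); omega
  constructor
  · rw [Finset.card_insert_of_notMem hne, Finset.card_erase_of_mem hqm]
    have := Finset.card_pos.2 ⟨q, hqm⟩
    omega
  · intro t
    rw [cnt_insert hne]
    by_cases htq : t ≤ q
    · have h1 : cnt m t = cnt (m.erase q) t + 1 := by
        rw [cnt_erase_add hqm t, if_pos htq]
      have h2 : t ≤ n := by omega
      rw [if_pos h2, ← h1]
      exact h.2 t
    · have h0 : cnt (m.erase q) t = 0 := by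
        rw [cnt, Finset.card_eq_zero, Finset.filter_eq_empty_iff]
        intro x hx
        have := hmax x (Finset.mem_of_mem_erase hx); omega
      rw [h0, zero_add]
      split
      · show 0 < cnt g' t
        rw [cnt, Finset.card_pos]
        exact ⟨n, Finset.mem_filter.2 ⟨hn, by assumption⟩⟩
      · omega

lemma mle_subset_range {m g : Finset ℕ} {N : ℕ} (h : mle m g) (hg : g ⊆ Finset.range N) :
    m ⊆ Finset.range N := by
  have hc := (mle_iff.1 h).2 N
  have hg0 : cnt g N = 0 := by
    rw [cnt, Finset.card_eq_zero, Finset.filter_eq_empty_iff]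
    intro x hx
    have := Finset.mem_range.1 (hg hx); omega
  intro x hx
  rw [Finset.mem_range]
  by_contra hxN
  have : 0 < cnt m N := by
    rw [cnt, Finset.card_pos]
    exact ⟨x, Finset.mem_filter.2 ⟨hx, by omega⟩⟩
  omega

lemma dcl_decreasing (I : Set (Finset ℕ)) : Decreasing (dcl I) := by
  rintro m m' h ⟨g, hg, hmg⟩
  exact ⟨g, hg, mle_trans h hmg⟩

lemma dcl_finite {I : Set (Finset ℕ)} {N : ℕ} (hI : ∀ g ∈ I, g ⊆ Finset.range N) :
    (dcl I).Finite := by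
  apply Set.Finite.subset (Finset.finite_toSet ((Finset.range N).powerset))
  rintro m ⟨g, hg, hmg⟩
  exact Finset.mem_coe.2 (Finset.mem_powerset.2 (mle_subset_range hmg (hI g hg)))

lemma Kdim_anti {G : Set (Finset ℕ)} (hfin : G.Finite) (hdec : Decreasing G)
    {i j : ℕ} (hij : i < j) : Kdim G j ≤ Kdim G i := by
  have hne : i ≠ j := hij.ne
  refine Set.ncard_le_ncard_of_injOn
    (fun m => if i ∈ m then m else insert i (m.erase j)) ?_ ?_
    (Set.Finite.subset hfin (fun m hm => hm.1))
  · rintro m ⟨hmG, hjm⟩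
    by_cases hi : i ∈ m
    · exact ⟨by simpa [hi] using hmG, by simp [hi]⟩
    · refine ⟨?_, by simp [hi]⟩
      simp only [hi, if_false]
      exact hdec _ _ (mle_swap hij hjm hi) hmG
  · rintro m1 ⟨hm1G, hj1⟩ m2 ⟨hm2G, hj2⟩ heq
    simp only at heq
    by_cases h1 : i ∈ m1 <;> by_cases h2 : i ∈ m2 <;>
      simp only [h1, h2, if_true, if_false] at heq
    · exact heq
    · exfalso
      have : j ∈ insert i (m2.erase j) := heq ▸ hj1
      rcases Finset.mem_insert.1 this with h | h
      · exact hne h.symm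
      · exact (Finset.notMem_erase _ _) h
    · exfalso
      have : j ∈ insert i (m1.erase j) := heq ▸ hj2
      rcases Finset.mem_insert.1 this with h | h
      · exact hne h.symm
      · exact (Finset.notMem_erase _ _) h
    · have hie1 : i ∉ m1.erase j := fun h => h1 (Finset.mem_of_mem_erase h)
      have hie2 : i ∉ m2.erase j := fun h => h2 (Finset.mem_of_mem_erase h)
      have : m1.erase j = m2.erase j := by
        have := congrArg (fun s => Finset.erase s i) heq
        simpa [Finset.erase_insert hie1, Finset.erase_insert hie2] using this
      calc m1 = insert j (m1.erase j) := (Finset.insert_erase hj1).symm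
        _ = insert j (m2.erase j) := by rw [this]
        _ = m2 := Finset.insert_erase hj2

lemma Kdim_lift_le {n : ℕ} (hn : 1 ≤ n) (Imin : Set (Finset ℕ))
    (hI : ∀ m ∈ Imin, m ⊆ Finset.range n) :
    Kdim (dcl ((fun g => insert n g) '' Imin)) (n - 1) ≤
      Kdim (dcl ((fun g => insert n g) '' Imin)) n := by
  set G := dcl ((fun g => insert n g) '' Imin) with hG
  have hIm : ∀ g ∈ (fun g => insert n g) '' Imin, g ⊆ Finset.range (n + 1) := by
    rintro g ⟨g0, hg0, rfl⟩
    intro x hx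
    rcases Finset.mem_insert.1 hx with rfl | h
    · simp
    · have := Finset.mem_range.1 (hI g0 hg0 h)
      rw [Finset.mem_range]; omega
  have hfin : G.Finite := dcl_finite hIm
  have hne : n - 1 ≠ n := by omega
  refine Set.ncard_le_ncard_of_injOn
    (fun m => if n ∈ m then m else insert n (m.erase (n - 1))) ?_ ?_
    (Set.Finite.subset hfin (fun m hm => hm.1))
  · rintro m ⟨hmG, hnm⟩
    by_cases hn' : n ∈ m
    · exact ⟨by simpa [hn'] using hmG, by simp [hn']⟩
    · refine ⟨?_, by simp [hn']⟩
      simp only [hn', if_false]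
      obtain ⟨g', hg', hmg⟩ := hmG
      have hng' : n ∈ g' := by
        obtain ⟨g0, _, rfl⟩ := hg'
        exact Finset.mem_insert_self _ _
      have hmr : m ⊆ Finset.range (n + 1) := mle_subset_range hmg (hIm g' hg')
      have hmax : ∀ x ∈ m, x ≤ n - 1 := by
        intro x hx
        have h1 := Finset.mem_range.1 (hmr hx)
        have h2 : x ≠ n := fun h => hn' (h ▸ hx)
        omega
      exact ⟨g', hg', mle_topswap hmg hng' hmax (by omega) hnm⟩
  · rintro m1 ⟨hm1G, hj1⟩ m2 ⟨hm2G, hj2⟩ heq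
    simp only at heq
    by_cases h1 : n ∈ m1 <;> by_cases h2 : n ∈ m2 <;>
      simp only [h1, h2, if_true, if_false] at heq
    · exact heq
    · exfalso
      have : n - 1 ∈ insert n (m2.erase (n - 1)) := heq ▸ hj1
      rcases Finset.mem_insert.1 this with h | h
      · exact hne h
      · exact (Finset.notMem_erase _ _) h
    · exfalso
      have : n - 1 ∈ insert n (m1.erase (n - 1)) := heq ▸ hj2
      rcases Finset.mem_insert.1 this with h | h
      · exact hne h
      · exact (Finset.notMem_erase _ _) h
    · have hie1 : n ∉ m1.erase (n - 1) := fun h => h1 (Finset.mem_of_mem_erase h)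
      have hie2 : n ∉ m2.erase (n - 1) := fun h => h2 (Finset.mem_of_mem_erase h)
      have : m1.erase (n - 1) = m2.erase (n - 1) := by
        have := congrArg (fun s => Finset.erase s n) heq
        simpa [Finset.erase_insert hie1, Finset.erase_insert hie2] using this
      calc m1 = insert (n - 1) (m1.erase (n - 1)) := (Finset.insert_erase hj1).symm
        _ = insert (n - 1) (m2.erase (n - 1)) := by rw [this]
        _ = m2 := Finset.insert_erase hj2

open Classical in
/-- The lifted code, generated by the downward closure of
`{g·V̄_n : g ∈ I_min}` in `n+1` variables, has symmetry at least `2`: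
`K'_{n-1} = K'_n`, this common value is the minimum of `K'_0,…,K'_n`, and at least two
indices attain the minimum. -/
theorem stmt5 (n : ℕ) (hn : 1 ≤ n) (Imin : Set (Finset ℕ))
    (hI : ∀ m ∈ Imin, m ⊆ Finset.range n) :
    Kdim (dcl ((fun g => insert n g) '' Imin)) (n - 1) =
      Kdim (dcl ((fun g => insert n g) '' Imin)) n ∧
    (∀ i ∈ Finset.range (n + 1),
      Kdim (dcl ((fun g => insert n g) '' Imin)) n ≤
        Kdim (dcl ((fun g => insert n g) '' Imin)) i) ∧
    2 ≤ ((Finset.range (n + 1)).filter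
      (fun i => ∀ j ∈ Finset.range (n + 1),
        Kdim (dcl ((fun g => insert n g) '' Imin)) i ≤
          Kdim (dcl ((fun g => insert n g) '' Imin)) j)).card := by
  have h2 := Kdim_lift_le hn Imin hI
  set G := dcl ((fun g => insert n g) '' Imin) with hG
  have hIm : ∀ g ∈ (fun g => insert n g) '' Imin, g ⊆ Finset.range (n + 1) := by
    rintro g ⟨g0, hg0, rfl⟩
    intro x hx
    rcases Finset.mem_insert.1 hx with rfl | h
    · simp
    · have := Finset.mem_range.1 (hI g0 hg0 h)
      rw [Finset.mem_range]; omega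
  have hfin : G.Finite := dcl_finite hIm
  have hdec : Decreasing G := dcl_decreasing _
  have hmono : ∀ i j : ℕ, i < j → Kdim G j ≤ Kdim G i :=
    fun i j h => Kdim_anti hfin hdec h
  have h1 : Kdim G n ≤ Kdim G (n - 1) := hmono _ _ (by omega)
  have heq : Kdim G (n - 1) = Kdim G n := le_antisymm h2 h1
  have hminA : ∀ i ∈ Finset.range (n + 1), Kdim G n ≤ Kdim G i := by
    intro i hi
    have hi' : i ≤ n := Nat.lt_succ_iff.1 (Finset.mem_range.1 hi)
    rcases lt_or_eq_of_le hi' with h | rfl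
    · exact hmono _ _ h
    · exact le_refl _
  refine ⟨heq, hminA, ?_⟩
  have hcard : ({n - 1, n} : Finset ℕ).card = 2 := by
    rw [Finset.card_insert_of_notMem (by simp; omega), Finset.card_singleton]
  rw [← hcard]
  apply Finset.card_le_card
  intro x hx
  rcases Finset.mem_insert.1 hx with rfl | hx
  · simp only [Finset.mem_filter]
    refine ⟨Finset.mem_range.2 (by omega), fun j hj => ?_⟩
    rw [heq]; exact hminA j hj
  · rw [Finset.mem_singleton.1 hx]
    simp only [Finset.mem_filter]
    exact ⟨Finset.mem_range.2 (by omega), hminA⟩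
end

section
/- Let C be a decreasing monomial code in n variables whose generating set G is the downward closure of a minimal set I_min, and suppose C is RM-polar with R(r−1,n) ⊆ C ⊆ R(r,n). Then the lifted code C' in n+1 variables, whose generating set is the downward closure of {g·V̄_n : g ∈ I_min}, satisfies R(r,n+1) ⊆ C' ⊆ R(r+1,n+1); in particular C' is RM-polar. -/
open Finset

/- ## Auxiliary lemmas -/

lemma forall2_le_refl (l : List ℕ) : List.Forall₂ (· ≤ ·) l l :=
  List.forall₂_same.mpr (fun x _ => le_refl x)

lemma eqCardLe_refl (m : Finset ℕ) : eqCardLe m m := forall2_le_refl _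

lemma forall2_le_trans : ∀ {l₁ l₂ l₃ : List ℕ}, List.Forall₂ (· ≤ ·) l₁ l₂ →
    List.Forall₂ (· ≤ ·) l₂ l₃ → List.Forall₂ (· ≤ ·) l₁ l₃
  | _, _, _, List.Forall₂.nil, List.Forall₂.nil => List.Forall₂.nil
  | _, _, _, List.Forall₂.cons h1 t1, List.Forall₂.cons h2 t2 =>
      List.Forall₂.cons (h1.trans h2) (forall2_le_trans t1 t2)

lemma eqCardLe_trans {a b c : Finset ℕ} (h1 : eqCardLe a b) (h2 : eqCardLe b c) :
    eqCardLe a c := forall2_le_trans h1 h2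

lemma mle_refl (m : Finset ℕ) : mle m m := Or.inl ⟨rfl, eqCardLe_refl m⟩

lemma mle_card_le {m m' : Finset ℕ} (h : mle m m') : m.card ≤ m'.card := by
  rcases h with ⟨h, _⟩ | ⟨h, _⟩ <;> omega

lemma mle_of_subset {t s : Finset ℕ} (h : t ⊆ s) : mle t s := by
  rcases lt_or_eq_of_le (Finset.card_le_card h) with hlt | heq
  · exact Or.inr ⟨hlt, t, h, rfl, eqCardLe_refl t⟩
  · have : t = s := Finset.eq_of_subset_of_card_le h heq.ge
    subst this
    exact mle_refl t

lemma forall2_sublist : ∀ {l₁ l₂ : List ℕ}, List.Forall₂ (· ≤ ·) l₁ l₂ →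
    ∀ {l₁' : List ℕ}, List.Sublist l₁' l₁ → ∃ l₂', List.Sublist l₂' l₂ ∧ List.Forall₂ (· ≤ ·) l₁' l₂'
  | _, _, List.Forall₂.nil, l₁', h => by
      rw [List.sublist_nil.mp h]
      exact ⟨[], List.nil_sublist _, List.Forall₂.nil⟩
  | _, _, @List.Forall₂.cons _ _ _ a b l₁ l₂ h1 t1, l₁', h => by
      cases h with
      | cons _ h' =>
          obtain ⟨l₂', hs, hf⟩ := forall2_sublist t1 h'
          exact ⟨l₂', hs.cons _, hf⟩
      | cons_cons _ h' =>
          obtain ⟨l₂', hs, hf⟩ := forall2_sublist t1 h'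
          exact ⟨b :: l₂', hs.cons₂ _, List.Forall₂.cons h1 hf⟩

lemma eqCardLe_restrict {t s d : Finset ℕ} (hts : t ⊆ s) (h : eqCardLe s d) :
    ∃ d', d' ⊆ d ∧ d'.card = t.card ∧ eqCardLe t d' := by
  have hsub : List.Sublist (t.sort (· ≤ ·)) (s.sort (· ≤ ·)) := by
    apply List.sublist_of_subperm_of_pairwise _ (Finset.pairwise_sort t _) (Finset.pairwise_sort s _)
    apply (Finset.sort_nodup t _).subperm
    intro x hx
    rw [Finset.mem_sort] at hx ⊢
    exact hts hx
  obtain ⟨l₂', hs2, hf⟩ := forall2_sublist h hsub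
  have hnd : l₂'.Nodup := (Finset.sort_nodup d _).sublist hs2
  have hsorted : l₂'.Pairwise (· ≤ ·) := (Finset.pairwise_sort d _).sublist hs2
  refine ⟨l₂'.toFinset, ?_, ?_, ?_⟩
  · intro x hx
    rw [List.mem_toFinset] at hx
    exact (Finset.mem_sort _).mp (hs2.subset hx)
  · rw [List.card_toFinset, hnd.dedup, ← hf.length_eq, Finset.length_sort]
  · unfold eqCardLe
    rw [(List.toFinset_sort (r := (· ≤ ·)) hnd).mpr hsorted]
    exact hf

lemma sort_insert_top {a : ℕ} {m : Finset ℕ} (h : ∀ x ∈ m, x < a) :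
    (insert a m).sort (· ≤ ·) = m.sort (· ≤ ·) ++ [a] := by
  have hnd : (m.sort (· ≤ ·) ++ [a]).Nodup := by
    rw [List.nodup_append']
    refine ⟨Finset.sort_nodup m _, List.nodup_singleton a, ?_⟩
    intro x hx hy
    rw [List.mem_singleton] at hy
    subst hy
    exact absurd (h x ((Finset.mem_sort _).mp hx)) (lt_irrefl x)
  have hsorted : (m.sort (· ≤ ·) ++ [a]).Pairwise (· ≤ ·) := by
    rw [List.pairwise_append]
    refine ⟨Finset.pairwise_sort m _, List.pairwise_singleton _ _, ?_⟩
    intro x hx y hy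
    rw [List.mem_singleton] at hy
    subst hy
    exact (h x ((Finset.mem_sort _).mp hx)).le
  have key := (List.toFinset_sort (r := (· ≤ ·)) hnd).mpr hsorted
  rw [← key]
  congr 1
  ext x
  simp only [List.toFinset_append, List.mem_toFinset, Finset.mem_union, Finset.mem_insert,
    List.toFinset_sort, Finset.sort_toFinset, List.mem_singleton, Finset.mem_coe,
    List.toFinset_cons, List.toFinset_nil, insert_empty_eq, Finset.mem_singleton]
  tauto

lemma mle_insert {t g : Finset ℕ} {a b : ℕ} (hta : ∀ x ∈ t, x < a) (hgb : ∀ x ∈ g, x < b)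
    (hab : a ≤ b) (h : mle t g) : mle (insert a t) (insert b g) := by
  have hat : a ∉ t := fun h' => lt_irrefl a (hta a h')
  have hbg : b ∉ g := fun h' => lt_irrefl b (hgb b h')
  have hct : (insert a t).card = t.card + 1 := Finset.card_insert_of_notMem hat
  have hcg : (insert b g).card = g.card + 1 := Finset.card_insert_of_notMem hbg
  have hab2 : List.Forall₂ (· ≤ ·) [a] [b] := List.Forall₂.cons hab List.Forall₂.nil
  rcases h with ⟨hc, he⟩ | ⟨hc, d, hd, hcard, he⟩
  · refine Or.inl ⟨by omega, ?_⟩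
    unfold eqCardLe
    rw [sort_insert_top hta, sort_insert_top hgb]
    exact List.rel_append he hab2
  · have hdb : ∀ x ∈ d, x < b := fun x hx => hgb x (hd hx)
    have hbd : b ∉ d := fun h' => lt_irrefl b (hdb b h')
    refine Or.inr ⟨by omega, insert b d, Finset.insert_subset_insert b hd, ?_, ?_⟩
    · rw [Finset.card_insert_of_notMem hbd, hct, hcard]
    · unfold eqCardLe
      rw [sort_insert_top hta, sort_insert_top hdb]
      exact List.rel_append he hab2

lemma evalMon_inter (n : ℕ) (m : Finset ℕ) :
    evalMon n m = evalMon n (m ∩ Finset.range n) := by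
  funext v
  unfold evalMon
  refine (Finset.prod_subset Finset.inter_subset_left ?_).symm
  intro i hi hni
  have hn : ¬ i < n := fun h =>
    hni (Finset.mem_inter.mpr ⟨hi, Finset.mem_range.mpr h⟩)
  rw [dif_neg hn, add_zero]

/-- The point `v_{m'}` with `v i = 0` iff `i ∈ m'`. -/
def chiV (n : ℕ) (m' : Finset ℕ) : Fin n → ZMod 2 := fun i => if (i : ℕ) ∈ m' then 0 else 1

lemma evalMon_chi (n : ℕ) (s m' : Finset ℕ) :
    evalMon n s (chiV n m') = if s ∩ Finset.range n ⊆ m' then 1 else 0 := by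
  unfold evalMon chiV
  split_ifs with hsub
  · apply Finset.prod_eq_one
    intro i hi
    by_cases h : i < n
    · rw [dif_pos h]
      have him : i ∈ m' := hsub (Finset.mem_inter.mpr ⟨hi, Finset.mem_range.mpr h⟩)
      simp [him]
    · rw [dif_neg h, add_zero]
  · rw [Finset.not_subset] at hsub
    obtain ⟨i, hi, him⟩ := hsub
    obtain ⟨his, hin⟩ := Finset.mem_inter.mp hi
    apply Finset.prod_eq_zero his
    rw [dif_pos (Finset.mem_range.mp hin)]
    simp only [Fin.val_mk] at *
    rw [if_neg him]
    decide

/-- The linear functional extracting the coefficient of the basis element `e_m`. -/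
def phiF (n : ℕ) (m : Finset ℕ) : ((Fin n → ZMod 2) → ZMod 2) →ₗ[ZMod 2] ZMod 2 where
  toFun f := ∑ m' ∈ m.powerset, f (chiV n m')
  map_add' f g := by simp [Finset.sum_add_distrib]
  map_smul' c f := by simp [Finset.mul_sum]

lemma card_filter_superset {t m : Finset ℕ} (h : t ⊆ m) :
    ((m.powerset).filter (fun m' => t ⊆ m')).card = 2 ^ ((m \ t).card) := by
  rw [← Finset.card_powerset]
  apply Finset.card_nbij' (i := fun m' => m' \ t) (j := fun u => u ∪ t)
  · intro m' hm'
    rw [Finset.mem_coe, Finset.mem_filter, Finset.mem_powerset] at hm'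
    rw [Finset.mem_coe, Finset.mem_powerset]
    exact Finset.sdiff_subset_sdiff hm'.1 (Finset.Subset.refl t)
  · intro u hu
    rw [Finset.mem_coe, Finset.mem_powerset] at hu
    rw [Finset.mem_coe, Finset.mem_filter, Finset.mem_powerset]
    exact ⟨Finset.union_subset (hu.trans Finset.sdiff_subset) h, Finset.subset_union_right⟩
  · intro m' hm'
    rw [Finset.mem_coe, Finset.mem_filter] at hm'
    exact Finset.sdiff_union_of_subset hm'.2
  · intro u hu
    rw [Finset.mem_coe, Finset.mem_powerset] at hu
    exact Finset.union_sdiff_cancel_right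
      (Finset.disjoint_of_subset_left hu Finset.sdiff_disjoint)

lemma phi_evalMon {n : ℕ} {m : Finset ℕ} (hm : m ⊆ Finset.range n) (s : Finset ℕ) :
    phiF n m (evalMon n s) = if s ∩ Finset.range n = m then 1 else 0 := by
  have step : phiF n m (evalMon n s) =
      (((m.powerset).filter (fun m' => s ∩ Finset.range n ⊆ m')).card : ZMod 2) := by
    show (∑ m' ∈ m.powerset, evalMon n s (chiV n m')) = _
    simp_rw [evalMon_chi]
    rw [Finset.sum_boole]
  rw [step]
  by_cases hsub : s ∩ Finset.range n ⊆ m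
  · rw [card_filter_superset hsub]
    by_cases heq : s ∩ Finset.range n = m
    · rw [if_pos heq]
      have hz : (m \ (s ∩ Finset.range n)).card = 0 := by rw [heq]; simp
      rw [hz]
      norm_num
    · rw [if_neg heq]
      have hpos : (m \ (s ∩ Finset.range n)).card ≠ 0 := by
        rw [Ne, Finset.card_eq_zero, Finset.sdiff_eq_empty_iff_subset]
        intro hms
        exact heq (Finset.Subset.antisymm hsub hms)
      push_cast
      rw [show (2 : ZMod 2) = 0 from rfl, zero_pow hpos]
  · have hz : ((m.powerset).filter (fun m' => s ∩ Finset.range n ⊆ m')).card = 0 := by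
      rw [Finset.card_eq_zero, Finset.filter_eq_empty_iff]
      intro m' hm'
      rw [Finset.mem_powerset] at hm'
      exact fun hc => hsub (hc.trans hm')
    rw [hz, if_neg (fun heq => hsub (by rw [heq]))]
    simp

lemma span_extract {n : ℕ} {m : Finset ℕ} {S : Set (Finset ℕ)} (hm : m ⊆ Finset.range n)
    (h : evalMon n m ∈ monCode n S) : ∃ s ∈ S, s ∩ Finset.range n = m := by
  by_contra hc
  push_neg at hc
  have hker : monCode n S ≤ LinearMap.ker (phiF n m) := by
    rw [monCode, Submodule.span_le]
    rintro _ ⟨s, hs, rfl⟩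
    rw [SetLike.mem_coe, LinearMap.mem_ker, phi_evalMon hm, if_neg (hc s hs)]
  have hz := hker h
  rw [LinearMap.mem_ker, phi_evalMon hm, if_pos (Finset.inter_eq_left.mpr hm)] at hz
  exact one_ne_zero hz

lemma card_le_of_mem_RM {n r : ℕ} {g : Finset ℕ} (hg : g ⊆ Finset.range n)
    (h : evalMon n g ∈ RMCode r n) : g.card ≤ r := by
  obtain ⟨s, ⟨hs1, hs2⟩, hsg⟩ := span_extract hg h
  have hsg' : s = g := by rw [← hsg, Finset.inter_eq_left.mpr hs1]
  rw [← hsg']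
  exact hs2

lemma helperH {n r : ℕ} {Imin : Set (Finset ℕ)}
    (h1 : RMCode (r - 1) n ≤ monCode n (dcl Imin)) {t : Finset ℕ}
    (ht : t ⊆ Finset.range n) (htc : t.card ≤ r - 1) : ∃ g ∈ Imin, mle t g := by
  have hmem : evalMon n t ∈ RMCode (r - 1) n :=
    Submodule.subset_span ⟨t, ⟨ht, htc⟩, rfl⟩
  obtain ⟨s, hs, hsm⟩ := span_extract ht (h1 hmem)
  obtain ⟨g, hg, hmle⟩ := hs
  have hts : t ⊆ s := by rw [← hsm]; exact Finset.inter_subset_left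
  exact ⟨g, hg, mle_trans (mle_of_subset hts) hmle⟩

/-- If the decreasing monomial code `C` generated by the downward closure
of `I_min` satisfies `R(r-1,n) ⊆ C ⊆ R(r,n)`, then the lifted code `C'` generated by the
downward closure of `{g·V̄_n : g ∈ I_min}` satisfies `R(r,n+1) ⊆ C' ⊆ R(r+1,n+1)`;
in particular `C'` is RM-polar. -/
theorem stmt9 (n : ℕ) (hn : 1 ≤ n) (Imin : Set (Finset ℕ))
    (hI : ∀ m ∈ Imin, m ⊆ Finset.range n) (r : ℕ)
    (h1 : RMCode (r - 1) n ≤ monCode n (dcl Imin))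
    (h2 : monCode n (dcl Imin) ≤ RMCode r n) :
    RMCode r (n + 1) ≤ monCode (n + 1) (dcl ((fun g => insert n g) '' Imin)) ∧
    monCode (n + 1) (dcl ((fun g => insert n g) '' Imin)) ≤ RMCode (r + 1) (n + 1) := by
  constructor
  · rw [RMCode, monCode, Submodule.span_le]
    rintro _ ⟨m, ⟨hm1, hm2⟩, rfl⟩
    have key : m ∈ dcl ((fun g => insert n g) '' Imin) := by
      by_cases hnm : n ∈ m
      · set t := m.erase n with ht
        have htr : t ⊆ Finset.range n := by
          intro x hx
          obtain ⟨hxn, hxm⟩ := Finset.mem_erase.mp hx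
          have hx1 := Finset.mem_range.mp (hm1 hxm)
          exact Finset.mem_range.mpr (by omega)
        have htc : t.card ≤ r - 1 := by
          rw [ht, Finset.card_erase_of_mem hnm]
          omega
        obtain ⟨g, hg, hmle⟩ := helperH h1 htr htc
        have hins := mle_insert (a := n) (b := n)
          (fun x hx => Finset.mem_range.mp (htr hx))
          (fun x hx => Finset.mem_range.mp (hI g hg hx)) le_rfl hmle
        rw [ht, Finset.insert_erase hnm] at hins
        exact ⟨insert n g, ⟨g, hg, rfl⟩, hins⟩
      · have hmr : m ⊆ Finset.range n := by
          intro x hx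
          have hx1 := Finset.mem_range.mp (hm1 hx)
          have hx2 : x ≠ n := fun h => hnm (h ▸ hx)
          exact Finset.mem_range.mpr (by omega)
        by_cases hcard : m.card ≤ r - 1
        · obtain ⟨g, hg, hmle⟩ := helperH h1 hmr hcard
          exact ⟨insert n g, ⟨g, hg, rfl⟩,
            mle_trans hmle (mle_of_subset (Finset.subset_insert n g))⟩
        · have hne : m.Nonempty := Finset.card_pos.mp (by omega)
          set M := m.max' hne with hM
          have hMm : M ∈ m := m.max'_mem hne
          set t := m.erase M with ht
          have htr : t ⊆ Finset.range n := fun x hx => hmr (Finset.mem_of_mem_erase hx)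
          have htc : t.card ≤ r - 1 := by
            rw [ht, Finset.card_erase_of_mem hMm]
            omega
          obtain ⟨g, hg, hmle⟩ := helperH h1 htr htc
          have hta : ∀ x ∈ t, x < M := fun x hx =>
            lt_of_le_of_ne (m.le_max' x (Finset.mem_of_mem_erase hx)) (Finset.mem_erase.mp hx).1
          have hMn : M ≤ n := le_of_lt (Finset.mem_range.mp (hmr hMm))
          have hins := mle_insert hta
            (fun x hx => Finset.mem_range.mp (hI g hg hx)) hMn hmle
          rw [ht, Finset.insert_erase hMm] at hins
          exact ⟨insert n g, ⟨g, hg, rfl⟩, hins⟩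
    exact Submodule.subset_span ⟨m, key, rfl⟩
  · rw [monCode, Submodule.span_le]
    rintro _ ⟨m, hm, rfl⟩
    obtain ⟨m', ⟨g, hg, rfl⟩, hmle⟩ := hm
    have hgr : g ⊆ Finset.range n := hI g hg
    have hgc : g.card ≤ r := by
      apply card_le_of_mem_RM hgr
      apply h2
      exact Submodule.subset_span ⟨g, ⟨g, hg, mle_refl g⟩, rfl⟩
    have hng : n ∉ g := fun h => lt_irrefl n (Finset.mem_range.mp (hgr h))
    have hcard : m.card ≤ r + 1 := by
      have hle := mle_card_le hmle
      rw [Finset.card_insert_of_notMem hng] at hle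
      omega
    rw [SetLike.mem_coe, evalMon_inter]
    apply Submodule.subset_span
    exact ⟨m ∩ Finset.range (n + 1),
      ⟨Finset.inter_subset_right,
        le_trans (Finset.card_le_card Finset.inter_subset_left) hcard⟩, rfl⟩
end

section
/- Let C be a decreasing monomial code of length 2^n with nonempty generating set G, and let r = max{deg(m) : m ∈ G}. Then the minimum Hamming distance of C equals 2^{n−r}. -/
open Finset

section Helpers

/-- Restriction of a Boolean function on `n+1` variables by fixing the last variable to `b`. -/
def Rb (n : ℕ) (b : ZMod 2) :
    ((Fin (n+1) → ZMod 2) → ZMod 2) →ₗ[ZMod 2] ((Fin n → ZMod 2) → ZMod 2) where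
  toFun f := fun v => f (Fin.snoc v b)
  map_add' := fun f g => rfl
  map_smul' := fun c f => rfl

lemma zmod2_cases : ∀ c : ZMod 2, c = 0 ∨ c = 1 := by decide

lemma evalMon_snoc (n : ℕ) (m : Finset ℕ) (hm : m ⊆ Finset.range (n+1))
    (v : Fin n → ZMod 2) (b : ZMod 2) :
    evalMon (n+1) m (Fin.snoc v b) =
      (if n ∈ m then 1 + b else 1) * evalMon n (m.erase n) v := by
  classical
  unfold evalMon
  have key : ∀ i ∈ m.erase n,
      (1 + if h : i < n + 1 then (Fin.snoc v b : Fin (n+1) → ZMod 2) ⟨i, h⟩ else 0)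
        = (1 + if h : i < n then v ⟨i, h⟩ else 0) := by
    intro i hi
    have hin : i < n := by
      have h1 : i < n + 1 := Finset.mem_range.mp (hm (Finset.mem_of_mem_erase hi))
      have h2 : i ≠ n := Finset.ne_of_mem_erase hi
      omega
    have hsn : (Fin.snoc v b : Fin (n+1) → ZMod 2) ⟨i, Nat.lt_succ_of_lt hin⟩ = v ⟨i, hin⟩ := by
      have : (⟨i, Nat.lt_succ_of_lt hin⟩ : Fin (n+1)) = Fin.castSucc ⟨i, hin⟩ := rfl
      rw [this, Fin.snoc_castSucc]
    rw [dif_pos (Nat.lt_succ_of_lt hin), dif_pos hin, hsn]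
  by_cases hn : n ∈ m
  · rw [if_pos hn, ← Finset.insert_erase hn,
      Finset.prod_insert (Finset.notMem_erase n m)]
    have hlast : (1 + if h : n < n + 1 then (Fin.snoc v b : Fin (n+1) → ZMod 2) ⟨n, h⟩ else 0) = 1 + b := by
      rw [dif_pos (Nat.lt_succ_self n)]
      have : (⟨n, Nat.lt_succ_self n⟩ : Fin (n+1)) = Fin.last n := rfl
      rw [this, Fin.snoc_last]
    rw [Finset.erase_insert (Finset.notMem_erase n m), hlast]
    exact congrArg _ (Finset.prod_congr rfl key)
  · rw [if_neg hn, one_mul, Finset.erase_eq_of_notMem hn]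
    have : m.erase n = m := Finset.erase_eq_of_notMem hn
    rw [← this]
    exact Finset.prod_congr rfl key

lemma erase_mem_RMset {r n : ℕ} {m : Finset ℕ} (hm : m ∈ RMset r (n+1)) :
    m.erase n ∈ RMset r n := by
  obtain ⟨hsub, hcard⟩ := hm
  refine ⟨fun i hi => ?_, le_trans (Finset.card_le_card (Finset.erase_subset n m)) hcard⟩
  have h1 : i < n + 1 := Finset.mem_range.mp (hsub (Finset.mem_of_mem_erase hi))
  have h2 : i ≠ n := Finset.ne_of_mem_erase hi
  exact Finset.mem_range.mpr (by omega)

lemma Rb_mem {r n : ℕ} (b : ZMod 2) {f : (Fin (n+1) → ZMod 2) → ZMod 2}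
    (hf : f ∈ RMCode r (n+1)) : Rb n b f ∈ RMCode r n := by
  induction hf using Submodule.span_induction with
  | mem g hg =>
    obtain ⟨m, hm, rfl⟩ := hg
    have hE : Rb n b (evalMon (n+1) m) =
        (if n ∈ m then 1 + b else 1) • evalMon n (m.erase n) := by
      funext v
      simp only [Rb, LinearMap.coe_mk, AddHom.coe_mk, Pi.smul_apply, smul_eq_mul]
      exact evalMon_snoc n m hm.1 v b
    rw [hE]
    exact Submodule.smul_mem _ _
      (Submodule.subset_span ⟨m.erase n, erase_mem_RMset hm, rfl⟩)
  | zero => simp only [map_zero]; exact Submodule.zero_mem _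
  | add x y hx hy ihx ihy => rw [map_add]; exact Submodule.add_mem _ ihx ihy
  | smul c x hx ihx => rw [map_smul]; exact Submodule.smul_mem _ _ ihx

lemma Rsum_mem {r n : ℕ} {f : (Fin (n+1) → ZMod 2) → ZMod 2}
    (hf : f ∈ RMCode (r+1) (n+1)) : Rb n 0 f + Rb n 1 f ∈ RMCode r n := by
  induction hf using Submodule.span_induction with
  | mem g hg =>
    obtain ⟨m, hm, rfl⟩ := hg
    by_cases hn : n ∈ m
    · have hE : Rb n 0 (evalMon (n+1) m) + Rb n 1 (evalMon (n+1) m)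
          = evalMon n (m.erase n) := by
        funext v
        simp only [Pi.add_apply, Rb, LinearMap.coe_mk, AddHom.coe_mk]
        rw [evalMon_snoc n m hm.1 v 0, evalMon_snoc n m hm.1 v 1, if_pos hn, if_pos hn]
        generalize evalMon n (m.erase n) v = E
        revert E
        decide
      rw [hE]
      refine Submodule.subset_span ⟨m.erase n, ⟨(erase_mem_RMset hm).1, ?_⟩, rfl⟩
      have := Finset.card_erase_of_mem hn
      have h2 := hm.2
      omega
    · have hE : Rb n 0 (evalMon (n+1) m) + Rb n 1 (evalMon (n+1) m) = 0 := by
        funext v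
        simp only [Pi.add_apply, Pi.zero_apply, Rb, LinearMap.coe_mk, AddHom.coe_mk]
        rw [evalMon_snoc n m hm.1 v 0, evalMon_snoc n m hm.1 v 1, if_neg hn, if_neg hn]
        generalize evalMon n (m.erase n) v = E
        revert E
        decide
      rw [hE]; exact Submodule.zero_mem _
  | zero => simp only [map_zero, add_zero]; exact Submodule.zero_mem _
  | add x y hx hy ihx ihy =>
    rw [map_add, map_add]
    have : Rb n 0 x + Rb n 0 y + (Rb n 1 x + Rb n 1 y)
        = (Rb n 0 x + Rb n 1 x) + (Rb n 0 y + Rb n 1 y) := by ring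
    rw [this]
    exact Submodule.add_mem _ ihx ihy
  | smul c x hx ihx =>
    rw [map_smul, map_smul, ← smul_add]
    exact Submodule.smul_mem _ _ ihx

def snocEquiv (n : ℕ) : ((Fin n → ZMod 2) × ZMod 2) ≃ (Fin (n+1) → ZMod 2) where
  toFun p := Fin.snoc p.1 p.2
  invFun w := (Fin.init w, w (Fin.last n))
  left_inv p := by simp [Fin.init_snoc, Fin.snoc_last]
  right_inv w := by simp [Fin.snoc_init_self]

lemma zmod2_univ : (Finset.univ : Finset (ZMod 2)) = {0, 1} := by decide

lemma sum_zmod2 {M : Type*} [AddCommMonoid M] (h : ZMod 2 → M) :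
    ∑ b : ZMod 2, h b = h 0 + h 1 := by
  rw [zmod2_univ, Finset.sum_insert (by decide), Finset.sum_singleton]

lemma wt_snoc (n : ℕ) (f : (Fin (n+1) → ZMod 2) → ZMod 2) :
    wt (n+1) f = wt n (Rb n 0 f) + wt n (Rb n 1 f) := by
  classical
  unfold wt
  rw [Finset.card_filter, Finset.card_filter, Finset.card_filter]
  rw [← Equiv.sum_comp (snocEquiv n) (fun w => if f w ≠ 0 then 1 else 0)]
  rw [Fintype.sum_prod_type]
  rw [Finset.sum_comm]
  simp only [snocEquiv, Equiv.coe_fn_mk]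
  rw [sum_zmod2]
  rfl

lemma wt_add_le (n : ℕ) (f g : (Fin n → ZMod 2) → ZMod 2) :
    wt n (f + g) ≤ wt n f + wt n g := by
  classical
  unfold wt
  refine le_trans (Finset.card_le_card ?_) (Finset.card_union_le _ _)
  intro v hv
  simp only [Finset.mem_filter, Finset.mem_univ, true_and, Pi.add_apply] at hv
  simp only [Finset.mem_union, Finset.mem_filter, Finset.mem_univ, true_and]
  by_contra h
  push_neg at h
  rw [h.1, h.2, add_zero] at hv
  exact hv rfl

lemma one_le_wt {n : ℕ} {f : (Fin n → ZMod 2) → ZMod 2} (h0 : f ≠ 0) : 1 ≤ wt n f := by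
  classical
  obtain ⟨v, hv⟩ := Function.ne_iff.mp h0
  exact Finset.card_pos.mpr ⟨v, Finset.mem_filter.mpr ⟨Finset.mem_univ v, hv⟩⟩

lemma rm0 {N : ℕ} {f : (Fin N → ZMod 2) → ZMod 2} (hf : f ∈ RMCode 0 N) :
    f = 0 ∨ f = fun _ => 1 := by
  have hset : RMset 0 N = {∅} := by
    ext m
    simp only [RMset, Set.mem_setOf_eq, Set.mem_singleton_iff, Nat.le_zero,
      Finset.card_eq_zero]
    constructor
    · rintro ⟨-, h⟩; exact h
    · rintro rfl; exact ⟨Finset.empty_subset _, rfl⟩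
  have hone : evalMon N ∅ = fun _ => 1 := by
    funext v; simp [evalMon]
  rw [RMCode, monCode, hset, Set.image_singleton, hone] at hf
  obtain ⟨c, hc⟩ := Submodule.mem_span_singleton.mp hf
  rcases zmod2_cases c with rfl | rfl
  · left; rw [← hc]; simp
  · right; rw [← hc]; funext v; simp

lemma rm_min : ∀ (n r : ℕ) (f : (Fin n → ZMod 2) → ZMod 2),
    f ∈ RMCode r n → f ≠ 0 → 2 ^ (n - r) ≤ wt n f := by
  intro n
  induction n with
  | zero =>
    intro r f hf h0
    simpa [Nat.zero_sub] using one_le_wt h0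
  | succ n ih =>
    intro r f hf h0
    by_cases hrn : n + 1 ≤ r
    · rw [Nat.sub_eq_zero_of_le hrn, pow_zero]
      exact one_le_wt h0
    have hr : r ≤ n := by omega
    have hsplit := wt_snoc n f
    by_cases hh : Rb n 0 f + Rb n 1 f = 0
    · -- the two halves agree
      have hf01 : Rb n 1 f = Rb n 0 f := by
        funext v
        have hv : Rb n 0 f v + Rb n 1 f v = 0 := congrFun hh v
        have : ∀ a b : ZMod 2, a + b = 0 → b = a := by decide
        exact this _ _ hv
      have h00 : Rb n 0 f ≠ 0 := by
        intro hz
        apply h0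
        funext w
        have hw : f (Fin.snoc (Fin.init w) (w (Fin.last n))) = 0 := by
          rcases zmod2_cases (w (Fin.last n)) with h | h
          · rw [h]; exact congrFun hz (Fin.init w)
          · rw [h]; rw [← hf01] at hz; exact congrFun hz (Fin.init w)
        rwa [Fin.snoc_init_self] at hw
      have hle := ih r (Rb n 0 f) (Rb_mem 0 hf) h00
      have harith : n + 1 - r = (n - r) + 1 := by omega
      calc 2 ^ (n + 1 - r) = 2 ^ (n - r) + 2 ^ (n - r) := by rw [harith]; ring
        _ ≤ wt n (Rb n 0 f) + wt n (Rb n 1 f) := by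
            rw [hf01]; exact Nat.add_le_add hle hle
        _ = wt (n+1) f := hsplit.symm
    · -- the difference is a nonzero codeword of smaller degree
      cases r with
      | zero =>
        exfalso
        apply hh
        rcases rm0 hf with rfl | rfl
        · simp only [map_zero, add_zero]
        · funext v
          show (1 : ZMod 2) + 1 = 0
          decide
      | succ r' =>
        have hmem : Rb n 0 f + Rb n 1 f ∈ RMCode r' n := Rsum_mem hf
        have hle := ih r' _ hmem hh
        have harith : n + 1 - (r' + 1) = n - r' := by omega
        rw [harith]
        calc 2 ^ (n - r') ≤ wt n (Rb n 0 f + Rb n 1 f) := hle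
          _ ≤ wt n (Rb n 0 f) + wt n (Rb n 1 f) := wt_add_le n _ _
          _ = wt (n+1) f := hsplit.symm

lemma card_zeroset (n : ℕ) (S : Finset (Fin n)) :
    (Finset.univ.filter fun v : Fin n → ZMod 2 => ∀ i ∈ S, v i = 0).card
      = 2 ^ (n - S.card) := by
  classical
  have hcard : (Finset.univ : Finset ({i : Fin n // i ∈ Sᶜ} → ZMod 2)).card
      = 2 ^ (n - S.card) := by
    rw [Finset.card_univ, Fintype.card_fun, Fintype.card_coe, ZMod.card,
      Finset.card_compl, Fintype.card_fin]
  rw [← hcard]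
  refine Finset.card_nbij' (fun v => fun j => v j.val)
    (fun g => fun i => if h : i ∈ Sᶜ then g ⟨i, h⟩ else 0) ?_ ?_ ?_ ?_
  · intro v _
    exact Finset.mem_univ _
  · intro g _
    refine Finset.mem_filter.mpr ⟨Finset.mem_univ _, fun i hi => ?_⟩
    dsimp only
    rw [dif_neg (by simpa using hi)]
  · intro v hv
    funext i
    dsimp only
    by_cases h : i ∈ Sᶜ
    · rw [dif_pos h]
    · rw [dif_neg h]
      exact ((Finset.mem_filter.mp hv).2 i (by simpa using h)).symm
  · intro g _
    funext j
    dsimp only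
    rw [dif_pos j.2]

lemma wt_evalMon {n : ℕ} {m : Finset ℕ} (hm : m ⊆ Finset.range n) :
    wt n (evalMon n m) = 2 ^ (n - m.card) := by
  classical
  have hlt : ∀ i ∈ m, i < n := fun i hi => Finset.mem_range.mp (hm hi)
  set S : Finset (Fin n) := m.attachFin hlt with hS
  have hcard : S.card = m.card := Finset.card_attachFin _ _
  have hiff : ∀ v : Fin n → ZMod 2, evalMon n m v ≠ 0 ↔ ∀ j ∈ S, v j = 0 := by
    intro v
    unfold evalMon
    rw [Finset.prod_ne_zero_iff]
    constructor
    · intro h j hj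
      have hjm : j.val ∈ m := (Finset.mem_attachFin hlt).mp hj
      have h1 := h j.val hjm
      rw [dif_pos j.isLt] at h1
      have hkey : ∀ a : ZMod 2, 1 + a ≠ 0 → a = 0 := by decide
      have h2 := hkey _ h1
      have h3 : (⟨j.val, j.isLt⟩ : Fin n) = j := rfl
      rwa [h3] at h2
    · intro h i hi
      rw [dif_pos (hlt i hi)]
      have hjS : (⟨i, hlt i hi⟩ : Fin n) ∈ S := (Finset.mem_attachFin hlt).mpr hi
      rw [h _ hjS]
      decide
  unfold wt
  rw [Finset.filter_congr (fun v _ => by rw [hiff v]), card_zeroset, hcard]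

lemma wt_ne_zero {n : ℕ} {f : (Fin n → ZMod 2) → ZMod 2} (h : wt n f ≠ 0) : f ≠ 0 := by
  intro hz
  apply h
  rw [hz]
  unfold wt
  simp

end Helpers

/-- A decreasing monomial code of length `2^n` with nonempty generating
set `G` of maximal degree `r` has minimum Hamming distance exactly `2^{n-r}`. -/
theorem stmt10 (n : ℕ) (G : Set (Finset ℕ)) (hG : ∀ m ∈ G, m ⊆ Finset.range n)
    (hdec : Decreasing G) (hne : G.Nonempty) (r : ℕ)
    (hr : IsGreatest {d | ∃ m ∈ G, m.card = d} r) :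
    IsLeast {w | ∃ f ∈ monCode n G, f ≠ 0 ∧ wt n f = w} (2 ^ (n - r)) := by
  constructor
  · -- a codeword of weight 2^(n-r)
    obtain ⟨m, hmG, hmcard⟩ := hr.1
    refine ⟨evalMon n m, Submodule.subset_span ⟨m, hmG, rfl⟩, ?_, ?_⟩
    · apply wt_ne_zero
      rw [wt_evalMon (hG m hmG), hmcard]
      positivity
    · rw [wt_evalMon (hG m hmG), hmcard]
  · -- lower bound
    rintro w ⟨f, hf, h0, rfl⟩
    have hsub : monCode n G ≤ RMCode r n := by
      apply Submodule.span_mono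
      apply Set.image_mono
      intro m hm
      exact ⟨hG m hm, hr.2 ⟨m, hm, rfl⟩⟩
    exact rm_min n r f (hsub hf) h0
end

section
/- Let C be a decreasing monomial code of length 2^n. Then every affine map z ↦ Az + b of F_2^n with A invertible lower triangular and b ∈ F_2^n induces (via the identification of coordinates with F_2^n by binary expansion) an automorphism of C; i.e., the lower triangular affine group LTA(n) is contained in the affine automorphism group A(C). -/
open Finset

/-! ### Auxiliary lemmas -/


lemma sort_min_cons (S : Finset ℕ) (h : S.Nonempty) :
    S.sort (· ≤ ·) = S.min' h :: (S.erase (S.min' h)).sort (· ≤ ·) := by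
  refine List.Perm.eq_of_pairwise' (Finset.pairwise_sort _ _) ?_ ?_
  · rw [List.pairwise_cons]
    refine ⟨fun b hb => S.min'_le b (mem_of_mem_erase ((Finset.mem_sort _).mp hb)),
      Finset.pairwise_sort _ _⟩
  · apply List.perm_of_nodup_nodup_toFinset_eq (Finset.sort_nodup _ _)
    · exact List.nodup_cons.mpr ⟨fun hc => (Finset.mem_erase.mp ((Finset.mem_sort _).mp hc)).1 rfl,
        Finset.sort_nodup _ _⟩
    · rw [Finset.sort_toFinset]
      simp only [List.toFinset_cons, Finset.sort_toFinset]
      exact (Finset.insert_erase (S.min'_mem h)).symm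

lemma cnt_s12 : ∀ (N : ℕ) (S d : Finset ℕ), S.card = N → d.card = N →
    (∀ k, (d.filter (· ≤ k)).card ≤ (S.filter (· ≤ k)).card) → eqCardLe S d := by
  intro N
  induction N with
  | zero =>
    intro S d hS hd _
    rw [Finset.card_eq_zero] at hS hd
    subst hS; subst hd
    unfold eqCardLe
    rw [Finset.sort_empty]
    exact List.Forall₂.nil
  | succ N ih =>
    intro S d hS hd hcnt
    have hSne : S.Nonempty := Finset.card_pos.mp (by omega)
    have hdne : d.Nonempty := Finset.card_pos.mp (by omega)
    set a := S.min' hSne with ha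
    set bb := d.min' hdne with hbb
    have hab : a ≤ bb := by
      have h1 : bb ∈ d.filter (· ≤ bb) := Finset.mem_filter.mpr ⟨d.min'_mem hdne, le_refl _⟩
      have h2 : (S.filter (· ≤ bb)).Nonempty :=
        Finset.card_pos.mp (lt_of_lt_of_le (Finset.card_pos.mpr ⟨bb, h1⟩) (hcnt bb))
      obtain ⟨x, hx⟩ := h2
      exact le_trans (S.min'_le x (Finset.mem_filter.mp hx).1) (Finset.mem_filter.mp hx).2
    have hrec : eqCardLe (S.erase a) (d.erase bb) := by
      apply ih
      · rw [Finset.card_erase_of_mem (S.min'_mem hSne), hS]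
        omega
      · rw [Finset.card_erase_of_mem (d.min'_mem hdne), hd]
        omega
      · intro k
        rw [Finset.filter_erase, Finset.filter_erase]
        by_cases hk : bb ≤ k
        · have h1 : bb ∈ Finset.filter (fun x => x ≤ k) d :=
            Finset.mem_filter.mpr ⟨d.min'_mem hdne, hk⟩
          have h2 : a ∈ Finset.filter (fun x => x ≤ k) S :=
            Finset.mem_filter.mpr ⟨S.min'_mem hSne, le_trans hab hk⟩
          rw [Finset.card_erase_of_mem h1, Finset.card_erase_of_mem h2]
          exact Nat.sub_le_sub_right (hcnt k) 1
        · have : Finset.filter (· ≤ k) d = ∅ := by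
            apply Finset.eq_empty_of_forall_notMem
            intro y hy
            obtain ⟨hyd, hyk⟩ := Finset.mem_filter.mp hy
            exact hk (le_trans (d.min'_le y hyd) hyk)
          rw [this]
          simp
    unfold eqCardLe at hrec ⊢
    rw [sort_min_cons S hSne, sort_min_cons d hdne]
    exact List.Forall₂.cons hab hrec

lemma count_le (S d : Finset ℕ) (f : ℕ → ℕ) (him : S.image f = d)
    (hle : ∀ s ∈ S, s ≤ f s) (k : ℕ) :
    (d.filter (· ≤ k)).card ≤ (S.filter (· ≤ k)).card := by
  have hsub : d.filter (· ≤ k) ⊆ (S.filter (· ≤ k)).image f := by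
    intro y hy
    obtain ⟨hyd, hyk⟩ := Finset.mem_filter.mp hy
    rw [← him] at hyd
    obtain ⟨x, hx, rfl⟩ := Finset.mem_image.mp hyd
    exact Finset.mem_image.mpr ⟨x, Finset.mem_filter.mpr ⟨hx, le_trans (hle x hx) hyk⟩, rfl⟩
  exact le_trans (Finset.card_le_card hsub) Finset.card_image_le

lemma eqCardLe_of_image (S d : Finset ℕ) (f : ℕ → ℕ) (him : S.image f = d)
    (hcard : S.card = d.card) (hle : ∀ s ∈ S, s ≤ f s) : eqCardLe S d :=
  cnt_s12 d.card S d hcard rfl (count_le S d f him hle)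

lemma mle_image (m T : Finset ℕ) (g : ℕ → ℕ) (hT : T ⊆ m) (hg : ∀ i ∈ T, g i ≤ i) :
    mle (T.image g) m := by
  classical
  set S := T.image g with hSdef
  set f : ℕ → ℕ := Function.invFunOn g ↑T with hfdef
  have hfmem : ∀ s ∈ S, f s ∈ T ∧ g (f s) = s := by
    intro s hs
    obtain ⟨x, hx, rfl⟩ := Finset.mem_image.mp hs
    have hex : ∃ a ∈ (↑T : Set ℕ), g a = g x := ⟨x, hx, rfl⟩
    exact ⟨Function.invFunOn_mem hex, Function.invFunOn_eq hex⟩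
  set dd := S.image f with hdd
  have hdT : dd ⊆ T := by
    intro y hy
    obtain ⟨s, hs, rfl⟩ := Finset.mem_image.mp hy
    exact (hfmem s hs).1
  have hSd : dd.image g = S := by
    apply Finset.Subset.antisymm
    · intro y hy
      obtain ⟨s, hs, rfl⟩ := Finset.mem_image.mp hy
      obtain ⟨u, hu, rfl⟩ := Finset.mem_image.mp hs
      rw [(hfmem u hu).2]; exact hu
    · intro s hs
      exact Finset.mem_image.mpr ⟨f s, Finset.mem_image.mpr ⟨s, hs, rfl⟩, (hfmem s hs).2⟩
  have hcard : dd.card = S.card := by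
    refine le_antisymm Finset.card_image_le ?_
    conv_lhs => rw [← hSd]
    exact Finset.card_image_le
  have hle' : ∀ s ∈ S, s ≤ f s := by
    intro s hs
    calc s = g (f s) := (hfmem s hs).2.symm
    _ ≤ f s := hg _ (hfmem s hs).1
  have hScard : S.card ≤ m.card :=
    le_trans Finset.card_image_le (Finset.card_le_card hT)
  rcases eq_or_lt_of_le hScard with heq | hlt
  · left
    refine ⟨heq, ?_⟩
    have hdm : dd = m := Finset.eq_of_subset_of_card_le (hdT.trans hT) (by rw [hcard, heq])
    exact eqCardLe_of_image S m f (by rw [← hdm]) heq hle'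
  · right
    exact ⟨hlt, dd, hdT.trans hT, hcard, eqCardLe_of_image S dd f rfl hcard.symm hle'⟩


section Aux

variable (n : ℕ) (A : Matrix (Fin n) (Fin n) (ZMod 2)) (b : Fin n → ZMod 2)

/-- Entry of `A` as a total function on `ℕ`. -/
def Aent (i j : ℕ) : ZMod 2 :=
  if hi : i < n then if hj : j < n then A ⟨i, hi⟩ ⟨j, hj⟩ else 0 else 0

/-- Constant term of the `i`-th negated affine factor. -/
def cst (i : ℕ) : ZMod 2 :=
  1 + (if hi : i < n then b ⟨i, hi⟩ else 0) + ∑ j ∈ Finset.Iic i, Aent n A i j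

/-- Coefficients of the `i`-th negated affine factor; index `n` encodes the constant term. -/
def coefc (i j : ℕ) : ZMod 2 := if j = n then cst n A b i else Aent n A i j

/-- The negated variable `W̄_j = 1 + V_j` (equal to `1` for `j ≥ n`). -/
def Wf (j : ℕ) : (Fin n → ZMod 2) → ZMod 2 :=
  fun z => if h : j < n then 1 + z ⟨j, h⟩ else 1

end Aux

lemma evalMon_eq_prodW' (n : ℕ) (m : Finset ℕ) (z : Fin n → ZMod 2) :
    (∏ i ∈ m, (1 + if h : i < n then z ⟨i, h⟩ else 0)) = ∏ j ∈ m, Wf n j z := by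
  unfold Wf
  apply Finset.prod_congr rfl
  intro j _
  split_ifs <;> simp

lemma prod_image_idem {M : Type*} [CommMonoid M] (s : Finset ℕ) (p : ℕ → ℕ) (f : ℕ → M)
    (hf : ∀ b, f b * f b = f b) :
    ∏ j ∈ s.image p, f j = ∏ i ∈ s, f (p i) := by
  classical
  induction s using Finset.induction_on with
  | empty => simp
  | @insert a s ha ih =>
    rw [Finset.image_insert, Finset.prod_insert ha]
    by_cases hmem : p a ∈ s.image p
    · rw [Finset.insert_eq_self.mpr hmem, ← ih, ← Finset.mul_prod_erase _ _ hmem, ← mul_assoc, hf]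
    · rw [Finset.prod_insert hmem, ih]

lemma factor (n : ℕ) (A : Matrix (Fin n) (Fin n) (ZMod 2)) (b : Fin n → ZMod 2)
    (hLT : ∀ i j : Fin n, i < j → A i j = 0) (i : ℕ) (hi : i < n) (z : Fin n → ZMod 2) :
    (1 + if h : i < n then (A.mulVec z + b) ⟨i, h⟩ else 0)
      = ∑ j ∈ insert n (Finset.Iic i), coefc n A b i j * Wf n j z := by
  classical
  have hxx : ∀ x : ZMod 2, x + x = 0 := by decide
  have hnot : n ∉ Finset.Iic i := by simp only [Finset.mem_Iic]; omega
  rw [Finset.sum_insert hnot, dif_pos hi]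
  have hWn : Wf n n z = 1 := dif_neg (lt_irrefl n)
  have hcn : coefc n A b i n = cst n A b i := if_pos rfl
  rw [hWn, hcn, mul_one]
  have hW : ∀ j ∈ Finset.Iic i, coefc n A b i j * Wf n j z
      = Aent n A i j + Aent n A i j * (if h : j < n then z ⟨j, h⟩ else 0) := by
    intro j hj
    have hjn : j < n := lt_of_le_of_lt (Finset.mem_Iic.mp hj) hi
    rw [coefc, if_neg (by omega), Wf, dif_pos hjn, dif_pos hjn, mul_add, mul_one]
  rw [Finset.sum_congr rfl hW, Finset.sum_add_distrib, cst, dif_pos hi]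
  have hM : (A.mulVec z) ⟨i, hi⟩
      = ∑ j ∈ Finset.Iic i, Aent n A i j * (if h : j < n then z ⟨j, h⟩ else 0) := by
    have h1 : (A.mulVec z) ⟨i, hi⟩
        = ∑ j ∈ Finset.range n, Aent n A i j * (if h : j < n then z ⟨j, h⟩ else 0) := by
      rw [← Fin.sum_univ_eq_sum_range
        (fun j => Aent n A i j * (if h : j < n then z ⟨j, h⟩ else 0)) n]
      rw [Matrix.mulVec, dotProduct]
      apply Finset.sum_congr rfl
      intro j _
      simp [Aent, dif_pos hi, j.isLt]
    rw [h1]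
    symm
    apply Finset.sum_subset
    · intro j hj
      exact Finset.mem_range.mpr (lt_of_le_of_lt (Finset.mem_Iic.mp hj) hi)
    · intro j hjr hjI
      have hij : i < j := by simp only [Finset.mem_Iic] at hjI; omega
      have hjn : j < n := Finset.mem_range.mp hjr
      have : Aent n A i j = 0 := by
        rw [Aent, dif_pos hi, dif_pos hjn]
        exact hLT ⟨i, hi⟩ ⟨j, hjn⟩ hij
      rw [this, zero_mul]
  rw [Pi.add_apply, hM]
  have hSA := hxx (∑ j ∈ Finset.Iic i, Aent n A i j)
  linear_combination -hSA


lemma Wf_idem (n j : ℕ) (z : Fin n → ZMod 2) : Wf n j z * Wf n j z = Wf n j z := by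
  have h : ∀ x : ZMod 2, x * x = x := by decide
  exact h _


/-- For a decreasing monomial code `C` of length `2^n`, every affine map
`z ↦ Az + b` with `A` invertible lower triangular induces an automorphism of `C`:
`LTA(n) ⊆ A(C)`. -/
theorem stmt12 (n : ℕ) (G : Set (Finset ℕ)) (hG : ∀ m ∈ G, m ⊆ Finset.range n)
    (hdec : Decreasing G) (A : Matrix (Fin n) (Fin n) (ZMod 2))
    (hA : IsUnit (Matrix.det A)) (hLT : ∀ i j : Fin n, i < j → A i j = 0)
    (b : Fin n → ZMod 2) :
    affPerm n A b ∈ affAutGroup n (monCode n G) := by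
  classical
  refine ⟨A, b, hA, rfl, ?_⟩
  intro f hf
  have key : ∀ m ∈ G, evalMon n m ∘ affPerm n A b ∈ monCode n G := by
    intro m hm
    have hfun : evalMon n m ∘ affPerm n A b
        = ∑ p ∈ m.pi (fun i => insert n (Finset.Iic i)),
            (∏ x ∈ m.attach, coefc n A b x.1 (p x.1 x.2)) •
            evalMon n ((m.filter (fun i => (if h : i ∈ m then p i h else n) ≠ n)).image
              (fun i => if h : i ∈ m then p i h else n)) := by
      funext z
      rw [Function.comp_apply]
      have h1 : evalMon n m (affPerm n A b z)
          = ∏ i ∈ m, ∑ j ∈ insert n (Finset.Iic i), coefc n A b i j * Wf n j z := by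
        unfold evalMon
        apply Finset.prod_congr rfl
        intro i him
        exact factor n A b hLT i (Finset.mem_range.mp (hG m hm him)) z
      rw [h1, Finset.prod_sum, Finset.sum_apply]
      apply Finset.sum_congr rfl
      intro p hp
      rw [Pi.smul_apply, smul_eq_mul, Finset.prod_mul_distrib]
      congr 1
      have h2 : ∏ x ∈ m.attach, Wf n (p x.1 x.2) z
          = ∏ i ∈ m, Wf n (if h : i ∈ m then p i h else n) z := by
        rw [← Finset.prod_attach m (fun i => Wf n (if h : i ∈ m then p i h else n) z)]
        apply Finset.prod_congr rfl
        intro x _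
        rw [dif_pos x.2]
      rw [h2]
      show _ = evalMon n _ z
      simp only [evalMon]
      rw [evalMon_eq_prodW', prod_image_idem _ _ _ (fun c => Wf_idem n c z)]
      rw [← Finset.prod_filter_mul_prod_filter_not m
        (fun i => (if h : i ∈ m then p i h else n) ≠ n)
        (fun i => Wf n (if h : i ∈ m then p i h else n) z)]
      have h3 : (∏ i ∈ m.filter (fun i => ¬ (if h : i ∈ m then p i h else n) ≠ n),
          Wf n (if h : i ∈ m then p i h else n) z) = 1 := by
        apply Finset.prod_eq_one
        intro i hi
        have : (if h : i ∈ m then p i h else n) = n := not_not.mp (Finset.mem_filter.mp hi).2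
        rw [this]
        exact dif_neg (lt_irrefl n)
      rw [h3, mul_one]
    rw [hfun]
    apply Submodule.sum_mem
    intro p hp
    apply Submodule.smul_mem
    apply Submodule.subset_span
    have hmem : ((m.filter (fun i => (if h : i ∈ m then p i h else n) ≠ n)).image
        (fun i => if h : i ∈ m then p i h else n)) ∈ G := by
      apply hdec _ m ?_ hm
      apply mle_image
      · exact Finset.filter_subset _ _
      · intro i hi
        obtain ⟨him, hne⟩ := Finset.mem_filter.mp hi
        have hpi : p i him ∈ insert n (Finset.Iic i) := Finset.mem_pi.mp hp i him
        rw [dif_pos him] at hne ⊢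
        rcases Finset.mem_insert.mp hpi with h | h
        · exact absurd h hne
        · exact Finset.mem_Iic.mp h
    exact Set.mem_image_of_mem _ hmem
  have hle : monCode n G ≤ Submodule.comap
      (LinearMap.funLeft (ZMod 2) (ZMod 2) (affPerm n A b)) (monCode n G) := by
    rw [monCode, Submodule.span_le]
    rintro _ ⟨m, hm, rfl⟩
    exact key m hm
  exact hle hf
end
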